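/- arXiv:2510.02754 — 7 statements merged into one kernel-verified Lean document; each statement's English description precedes it below -/
import Mathlib

section
/- Let A be a nonnegative n×n matrix, let τ, ρ be reals with 1 < τ < ρ, let w ∈ ℝⁿ be a positive vector with A w = ρ w, and let ξ ∈ ℝⁿ be a nonnegative vector with (ρ − τ) w ≥ ξ entrywise. Suppose (V_p)_{p≥0} is a sequence of nonnegative vectors in ℝⁿ satisfying V_{p+1} ≥ A V_p − ξ entrywise for all p, and V_0 ≥ w. Then V_p ≥ τ^p w entrywise for all p ≥ 0. -/
theorem lower_iterate_bound {n : Type*} [Fintype n]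
    (A : Matrix n n ℝ) (τ ρ : ℝ) (w ξ : n → ℝ) (V : ℕ → n → ℝ)
    (hA : ∀ i j, 0 ≤ A i j) (hτ : 1 < τ) (hτρ : τ < ρ)
    (hw : ∀ i, 0 < w i) (heig : A.mulVec w = ρ • w)
    (hξ : ∀ i, 0 ≤ ξ i) (hξw : ∀ i, ξ i ≤ (ρ - τ) * w i)
    (hV : ∀ p i, 0 ≤ V p i)
    (hrec : ∀ p i, A.mulVec (V p) i - ξ i ≤ V (p + 1) i)
    (hV0 : ∀ i, w i ≤ V 0 i) :
    ∀ p i, τ ^ p * w i ≤ V p i := by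
  intro p
  induction p with
  | zero => intro i; simpa using hV0 i
  | succ p ih =>
    intro i
    have hτp : (1 : ℝ) ≤ τ ^ p := one_le_pow₀ hτ.le
    have hAV : τ ^ p * (A.mulVec w i) ≤ A.mulVec (V p) i := by
      simp only [Matrix.mulVec, dotProduct, Finset.mul_sum]
      apply Finset.sum_le_sum
      intro j _
      rw [mul_left_comm]
      exact mul_le_mul_of_nonneg_left (ih j) (hA i j)
    have hwe : A.mulVec w i = ρ * w i := by rw [heig]; simp
    have hξi : ξ i ≤ τ ^ p * ((ρ - τ) * w i) := by
      calc ξ i ≤ (ρ - τ) * w i := hξw i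
        _ ≤ τ ^ p * ((ρ - τ) * w i) := le_mul_of_one_le_left
            (mul_nonneg (by linarith) (hw i).le) hτp
    have := hrec p i
    rw [hwe] at hAV
    have : τ ^ p * (ρ * w i) - τ ^ p * ((ρ - τ) * w i) ≤ V (p + 1) i := by
      linarith [hrec p i]
    calc τ ^ (p + 1) * w i = τ ^ p * (ρ * w i) - τ ^ p * ((ρ - τ) * w i) := by ring
      _ ≤ V (p + 1) i := this
end

section
/- Let L : D → I be an affine bijection between closed intervals, let S, q : D → ℝ be functions, and let f be a function on an interval containing L(D) ∪ D satisfying f(L(x)) = S(x) f(x) + q(x) for all x ∈ D. Then for any subinterval J ⊆ D and any x ∈ J, | O(f, L(J)) − |S(x)|·O(f, J) | ≤ 2 M_{f,J} O(S, J) + O(q, J), where M_{f,J} = sup_{t∈J} |f(t)| and O(g, U) denotes the oscillation of g on U. -/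
/-- The oscillation of `g` on a set `s`: `sup_{x',x'' ∈ s} |g x' - g x''|`. -/
noncomputable def osc (g : ℝ → ℝ) (s : Set ℝ) : ℝ :=
  sSup ((fun p : ℝ × ℝ => |g p.1 - g p.2|) '' (s ×ˢ s))

lemma osc_bddAbove {g : ℝ → ℝ} {s : Set ℝ} (hb : BddAbove ((fun t => |g t|) '' s)) :
    BddAbove ((fun p : ℝ × ℝ => |g p.1 - g p.2|) '' (s ×ˢ s)) := by
  obtain ⟨C, hC⟩ := hb
  refine ⟨C + C, ?_⟩
  rintro y ⟨⟨a, b⟩, ⟨ha, hb'⟩, rfl⟩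
  calc |g a - g b| ≤ |g a| + |g b| := abs_sub _ _
    _ ≤ C + C := add_le_add (hC ⟨a, ha, rfl⟩) (hC ⟨b, hb', rfl⟩)

lemma abs_sub_le_osc {g : ℝ → ℝ} {s : Set ℝ} (hb : BddAbove ((fun t => |g t|) '' s))
    {a b : ℝ} (ha : a ∈ s) (hb' : b ∈ s) : |g a - g b| ≤ osc g s :=
  le_csSup (osc_bddAbove hb) ⟨(a, b), ⟨ha, hb'⟩, rfl⟩

lemma osc_nonneg {g : ℝ → ℝ} {s : Set ℝ} (hb : BddAbove ((fun t => |g t|) '' s))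
    {a : ℝ} (ha : a ∈ s) : 0 ≤ osc g s := by
  have := abs_sub_le_osc hb ha ha
  simpa using this

lemma osc_le {g : ℝ → ℝ} {s : Set ℝ} {C : ℝ} (hne : s.Nonempty)
    (h : ∀ a ∈ s, ∀ b ∈ s, |g a - g b| ≤ C) : osc g s ≤ C := by
  apply csSup_le
  · exact ⟨_, ⟨(hne.some, hne.some), ⟨hne.some_mem, hne.some_mem⟩, rfl⟩⟩
  · rintro y ⟨⟨a, b⟩, ⟨ha, hb⟩, rfl⟩
    exact h a ha b hb

/-- If `f ∘ L = S·f + q` on `D = [c,d]`, `L` an affine bijection, then for any subinterval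
`J = [u,v] ⊆ D` and any `x ∈ J`,
`| O(f, L(J)) − |S(x)|·O(f,J) | ≤ 2 M_{f,J} O(S,J) + O(q,J)`. -/
theorem osc_image_estimate (L S q f : ℝ → ℝ) (c d : ℝ) (hcd : c ≤ d)
    (α β : ℝ) (hα : α ≠ 0) (hL : ∀ x, L x = α * x + β)
    (heq : ∀ x ∈ Set.Icc c d, f (L x) = S x * f x + q x)
    (u v : ℝ) (huv : u ≤ v) (hJ : Set.Icc u v ⊆ Set.Icc c d)
    (hfb : BddAbove ((fun t => |f t|) '' Set.Icc u v))
    (hSb : BddAbove ((fun t => |S t|) '' Set.Icc u v))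
    (hqb : BddAbove ((fun t => |q t|) '' Set.Icc u v))
    (x : ℝ) (hx : x ∈ Set.Icc u v) :
    |osc f (L '' Set.Icc u v) - |S x| * osc f (Set.Icc u v)| ≤
      2 * sSup ((fun t => |f t|) '' Set.Icc u v) * osc S (Set.Icc u v)
        + osc q (Set.Icc u v) := by
  set J := Set.Icc u v with hJdef
  have hJne : J.Nonempty := Set.nonempty_Icc.mpr huv
  set M := sSup ((fun t => |f t|) '' J) with hMdef
  have hM : ∀ t ∈ J, |f t| ≤ M := fun t ht => le_csSup hfb ⟨t, ht, rfl⟩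
  have hM0 : 0 ≤ M := (abs_nonneg _).trans (hM _ hJne.some_mem)
  set OS := osc S J with hOSdef
  set Oq := osc q J with hOqdef
  set Of := osc f J with hOfdef
  have hOSle : ∀ a ∈ J, ∀ b ∈ J, |S a - S b| ≤ OS := fun a ha b hb => abs_sub_le_osc hSb ha hb
  have hOqle : ∀ a ∈ J, ∀ b ∈ J, |q a - q b| ≤ Oq := fun a ha b hb => abs_sub_le_osc hqb ha hb
  have hOfle : ∀ a ∈ J, ∀ b ∈ J, |f a - f b| ≤ Of := fun a ha b hb => abs_sub_le_osc hfb ha hb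
  have hOS0 : 0 ≤ OS := osc_nonneg hSb hJne.some_mem
  have hOq0 : 0 ≤ Oq := osc_nonneg hqb hJne.some_mem
  -- bound for f on L '' J
  set CS := sSup ((fun t => |S t|) '' J) with hCSdef
  set CQ := sSup ((fun t => |q t|) '' J) with hCQdef
  have hCS : ∀ t ∈ J, |S t| ≤ CS := fun t ht => le_csSup hSb ⟨t, ht, rfl⟩
  have hCQ : ∀ t ∈ J, |q t| ≤ CQ := fun t ht => le_csSup hqb ⟨t, ht, rfl⟩
  have hCS0 : 0 ≤ CS := (abs_nonneg _).trans (hCS _ hJne.some_mem)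
  have hfb' : BddAbove ((fun t => |f t|) '' (L '' J)) := by
    refine ⟨CS * M + CQ, ?_⟩
    rintro y ⟨_, ⟨t, ht, rfl⟩, rfl⟩
    have h1 : f (L t) = S t * f t + q t := heq t (hJ ht)
    calc |f (L t)| = |S t * f t + q t| := by rw [h1]
      _ ≤ |S t * f t| + |q t| := abs_add_le _ _
      _ = |S t| * |f t| + |q t| := by rw [abs_mul]
      _ ≤ CS * M + CQ := add_le_add
          (mul_le_mul (hCS t ht) (hM t ht) (abs_nonneg _) hCS0) (hCQ t ht)
  set A := osc f (L '' J) with hAdef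
  have hA0 : 0 ≤ A := osc_nonneg hfb' ⟨hJne.some, hJne.some_mem, rfl⟩
  -- the identity
  have hid : ∀ x' ∈ J, ∀ x'' ∈ J,
      f (L x') - f (L x'') = S x * (f x' - f x'')
        + ((S x' - S x) * f x' + (S x - S x'') * f x'' + (q x' - q x'')) := by
    intro x' h' x'' h''
    rw [heq x' (hJ h'), heq x'' (hJ h'')]; ring
  have hrem : ∀ x' ∈ J, ∀ x'' ∈ J,
      |(S x' - S x) * f x' + (S x - S x'') * f x'' + (q x' - q x'')|
        ≤ 2 * M * OS + Oq := by
    intro x' h' x'' h''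
    have h1 : |(S x' - S x) * f x'| ≤ OS * M := by
      rw [abs_mul]
      exact mul_le_mul (hOSle x' h' x hx) (hM x' h') (abs_nonneg _) hOS0
    have h2 : |(S x - S x'') * f x''| ≤ OS * M := by
      rw [abs_mul]
      exact mul_le_mul (hOSle x hx x'' h'') (hM x'' h'') (abs_nonneg _) hOS0
    have h3 : |q x' - q x''| ≤ Oq := hOqle x' h' x'' h''
    calc |(S x' - S x) * f x' + (S x - S x'') * f x'' + (q x' - q x'')|
        ≤ |(S x' - S x) * f x' + (S x - S x'') * f x''| + |q x' - q x''| := abs_add_le _ _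
      _ ≤ (|(S x' - S x) * f x'| + |(S x - S x'') * f x''|) + |q x' - q x''| :=
          add_le_add_left (abs_add_le _ _) _
      _ ≤ (OS * M + OS * M) + Oq := add_le_add (add_le_add h1 h2) h3
      _ = 2 * M * OS + Oq := by ring
  set E := 2 * M * OS + Oq with hEdef
  have hE0 : 0 ≤ E := by positivity
  -- A ≤ |S x| * Of + E
  have hAB : A ≤ |S x| * Of + E := by
    apply osc_le (hJne.image L)
    rintro _ ⟨x', h', rfl⟩ _ ⟨x'', h'', rfl⟩
    calc |f (L x') - f (L x'')|
        = |S x * (f x' - f x'')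
            + ((S x' - S x) * f x' + (S x - S x'') * f x'' + (q x' - q x''))| := by
          rw [hid x' h' x'' h'']
      _ ≤ |S x * (f x' - f x'')|
            + |(S x' - S x) * f x' + (S x - S x'') * f x'' + (q x' - q x'')| := abs_add_le _ _
      _ ≤ |S x| * Of + E := by
          refine add_le_add ?_ (hrem x' h' x'' h'')
          rw [abs_mul]
          exact mul_le_mul_of_nonneg_left (hOfle x' h' x'' h'') (abs_nonneg _)
  -- |S x| * Of ≤ A + E
  have hBA : |S x| * Of ≤ A + E := by
    have hkey : ∀ x' ∈ J, ∀ x'' ∈ J, |S x| * |f x' - f x''| ≤ A + E := by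
      intro x' h' x'' h''
      have h1 : S x * (f x' - f x'') = (f (L x') - f (L x''))
          - ((S x' - S x) * f x' + (S x - S x'') * f x'' + (q x' - q x'')) := by
        rw [hid x' h' x'' h'']; ring
      calc |S x| * |f x' - f x''| = |S x * (f x' - f x'')| := (abs_mul _ _).symm
        _ = |(f (L x') - f (L x''))
            - ((S x' - S x) * f x' + (S x - S x'') * f x'' + (q x' - q x''))| := by rw [h1]
        _ ≤ |f (L x') - f (L x'')|
            + |(S x' - S x) * f x' + (S x - S x'') * f x'' + (q x' - q x'')| := abs_sub _ _
        _ ≤ A + E := add_le_add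
            (abs_sub_le_osc hfb' ⟨x', h', rfl⟩ ⟨x'', h'', rfl⟩) (hrem x' h' x'' h'')
    rcases eq_or_lt_of_le (abs_nonneg (S x)) with h0 | hpos
    · rw [← h0, zero_mul]
      linarith
    · have hOf' : Of ≤ (A + E) / |S x| := by
        apply osc_le hJne
        intro a ha b hb
        rw [le_div_iff₀ hpos]
        calc |f a - f b| * |S x| = |S x| * |f a - f b| := mul_comm _ _
          _ ≤ A + E := hkey a ha b hb
      calc |S x| * Of ≤ |S x| * ((A + E) / |S x|) :=
            mul_le_mul_of_nonneg_left hOf' (abs_nonneg _)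
        _ = A + E := by field_simp
  rw [abs_sub_le_iff]
  constructor <;> linarith
end

section
/- Let f satisfy the functional equation f(L(x)) = S(x) f(x) + q(x) on a closed interval D, where L is an affine bijection from D onto an interval, f is bounded on D, and S, q have bounded variation on D. Then for every subinterval J ⊆ D, with s̄ = max_{x∈J}|S(x)| and s̲ = min_{x∈J}|S(x)|, and every uniform T-adic oscillation sum O_p, one has s̲·O_p(f,J) − ξ ≤ O_p(f, L(J)) ≤ s̄·O_p(f,J) + ξ, where ξ = 2 M_{f,J} Var(S,J) + Var(q,J). -/
open scoped ENNReal

/-- The level-`p` oscillation sum of `g` on `[a,b]` over the uniform subdivision of `[a,b]`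
into `T^p` subintervals. -/
noncomputable def oscSum (g : ℝ → ℝ) (a b : ℝ) (T p : ℕ) : ℝ :=
  ∑ ℓ ∈ Finset.range (T ^ p),
    osc g (Set.Icc (a + (ℓ : ℝ) * (b - a) / (T : ℝ) ^ p)
      (a + ((ℓ : ℝ) + 1) * (b - a) / (T : ℝ) ^ p))

lemma osc_image (f L : ℝ → ℝ) (s : Set ℝ) :
    osc f (L '' s) = osc (fun x => f (L x)) s := by
  unfold osc
  rw [Set.prod_image_image_eq, Set.image_image]

lemma image_affine_Icc_neg {α β a b : ℝ} (h : α < 0) :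
    (fun x => α * x + β) '' Set.Icc a b = Set.Icc (α * b + β) (α * a + β) := by
  ext y
  constructor
  · rintro ⟨x, ⟨h1, h2⟩, rfl⟩
    simp only [Set.mem_Icc]
    constructor <;> nlinarith
  · rintro ⟨h1, h2⟩
    refine ⟨(y - β) / α, ⟨?_, ?_⟩,
      by show α * ((y - β) / α) + β = y
         rw [mul_comm α, div_mul_eq_mul_div, mul_div_assoc, div_self h.ne, mul_one]; ring⟩
    · rw [le_div_iff_of_neg h]; nlinarith
    · rw [div_le_iff_of_neg h]; nlinarith

lemma evar_sum' (S : ℝ → ℝ) (a : ℕ → ℝ) (hinc : ∀ i, a i ≤ a (i + 1)) (n : ℕ) :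
    ∑ ℓ ∈ Finset.range n, eVariationOn S (Set.Icc (a ℓ) (a (ℓ + 1)))
      = eVariationOn S (Set.Icc (a 0) (a n)) := by
  have hmono : Monotone a := monotone_nat_of_le_succ hinc
  induction n with
  | zero =>
      rw [Finset.sum_range_zero]
      exact (eVariationOn.subsingleton S (by simp [Set.Icc_self])).symm
  | succ m ih =>
      rw [Finset.sum_range_succ, ih]
      have h1 : a 0 ≤ a m := hmono (Nat.zero_le m)
      have h2 : a m ≤ a (m + 1) := hinc m
      have := eVariationOn.Icc_add_Icc S (s := Set.univ) h1 h2 (Set.mem_univ _)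
      simpa using this

lemma osc_comp_bounds (L S q f : ℝ → ℝ) (M sbar sinf VS Vq : ℝ)
    (hM : 0 ≤ M) (hsinf0 : 0 ≤ sinf) (hVS0 : 0 ≤ VS) (hVq0 : 0 ≤ Vq)
    (a b : ℝ) (hab : a ≤ b)
    (hfM : ∀ x ∈ Set.Icc a b, |f x| ≤ M)
    (heq : ∀ x ∈ Set.Icc a b, f (L x) = S x * f x + q x)
    (hsbar : ∀ x ∈ Set.Icc a b, |S x| ≤ sbar)
    (hsinf : ∀ x ∈ Set.Icc a b, sinf ≤ |S x|)
    (hVS : ∀ x ∈ Set.Icc a b, ∀ y ∈ Set.Icc a b, |S x - S y| ≤ VS)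
    (hVq : ∀ x ∈ Set.Icc a b, ∀ y ∈ Set.Icc a b, |q x - q y| ≤ Vq) :
    sinf * osc f (Set.Icc a b) - (M * VS + Vq) ≤ osc (fun x => f (L x)) (Set.Icc a b)
    ∧ osc (fun x => f (L x)) (Set.Icc a b) ≤ sbar * osc f (Set.Icc a b) + (M * VS + Vq) := by
  have haI : a ∈ Set.Icc a b := Set.left_mem_Icc.2 hab
  have hsbar0 : 0 ≤ sbar := (abs_nonneg (S a)).trans (hsbar a haI)
  set A := (fun p : ℝ × ℝ => |f p.1 - f p.2|) '' (Set.Icc a b ×ˢ Set.Icc a b) with hA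
  have hAdef : osc f (Set.Icc a b) = sSup A := rfl
  have hAbdd : BddAbove A := by
    refine ⟨2 * M, ?_⟩
    rintro x ⟨⟨x1, x2⟩, ⟨h1, h2⟩, rfl⟩
    have e1 := hfM x1 h1
    have e2 := hfM x2 h2
    calc |f x1 - f x2| ≤ |f x1| + |f x2| := abs_sub _ _
      _ ≤ 2 * M := by linarith
  have hmemA : ∀ x ∈ Set.Icc a b, ∀ y ∈ Set.Icc a b,
      |f x - f y| ≤ osc f (Set.Icc a b) := by
    intro x hx y hy
    exact le_csSup hAbdd ⟨(x, y), ⟨hx, hy⟩, rfl⟩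
  have hosc0 : 0 ≤ osc f (Set.Icc a b) := by
    have := hmemA a haI a haI
    simpa using this
  have key : ∀ x ∈ Set.Icc a b, ∀ y ∈ Set.Icc a b,
      |f (L x) - f (L y)| ≤ sbar * osc f (Set.Icc a b) + (M * VS + Vq) := by
    intro x hx y hy
    rw [heq x hx, heq y hy]
    have e : S x * f x + q x - (S y * f y + q y)
        = S x * (f x - f y) + ((S x - S y) * f y + (q x - q y)) := by ring
    rw [e]
    have c1 : |S x * (f x - f y)| ≤ sbar * osc f (Set.Icc a b) := by
      rw [abs_mul]
      exact mul_le_mul (hsbar x hx) (hmemA x hx y hy) (abs_nonneg _) hsbar0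
    have c2 : |(S x - S y) * f y| ≤ VS * M := by
      rw [abs_mul]
      exact mul_le_mul (hVS x hx y hy) (hfM y hy) (abs_nonneg _) hVS0
    have c3 := hVq x hx y hy
    calc |S x * (f x - f y) + ((S x - S y) * f y + (q x - q y))|
        ≤ |S x * (f x - f y)| + |(S x - S y) * f y + (q x - q y)| := abs_add_le _ _
      _ ≤ |S x * (f x - f y)| + (|(S x - S y) * f y| + |q x - q y|) := by
          have := abs_add_le ((S x - S y) * f y) (q x - q y); linarith
      _ ≤ sbar * osc f (Set.Icc a b) + (M * VS + Vq) := by nlinarith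
  set B := (fun p : ℝ × ℝ => |f (L p.1) - f (L p.2)|) '' (Set.Icc a b ×ˢ Set.Icc a b) with hB
  have hBdef : osc (fun x => f (L x)) (Set.Icc a b) = sSup B := rfl
  have hBbdd : BddAbove B := by
    refine ⟨sbar * osc f (Set.Icc a b) + (M * VS + Vq), ?_⟩
    rintro x ⟨⟨x1, x2⟩, ⟨h1, h2⟩, rfl⟩
    exact key x1 h1 x2 h2
  have hmemB : ∀ x ∈ Set.Icc a b, ∀ y ∈ Set.Icc a b,
      |f (L x) - f (L y)| ≤ osc (fun x => f (L x)) (Set.Icc a b) := by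
    intro x hx y hy
    exact le_csSup hBbdd ⟨(x, y), ⟨hx, hy⟩, rfl⟩
  have hoscB0 : 0 ≤ osc (fun x => f (L x)) (Set.Icc a b) := by
    have := hmemB a haI a haI
    simpa using this
  constructor
  · have keyl : ∀ x ∈ Set.Icc a b, ∀ y ∈ Set.Icc a b,
        sinf * |f x - f y| ≤ osc (fun x => f (L x)) (Set.Icc a b) + (M * VS + Vq) := by
      intro x hx y hy
      have e2 : S x * (f x - f y)
          = (f (L x) - f (L y)) - ((S x - S y) * f y + (q x - q y)) := by
        rw [heq x hx, heq y hy]; ring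
      have c0 : sinf * |f x - f y| ≤ |S x| * |f x - f y| :=
        mul_le_mul_of_nonneg_right (hsinf x hx) (abs_nonneg _)
      have c1 : |S x| * |f x - f y| = |S x * (f x - f y)| := (abs_mul _ _).symm
      have c2 : |S x * (f x - f y)|
          ≤ |f (L x) - f (L y)| + |(S x - S y) * f y + (q x - q y)| := by
        rw [e2]; exact abs_sub _ _
      have c3 : |(S x - S y) * f y| ≤ VS * M := by
        rw [abs_mul]
        exact mul_le_mul (hVS x hx y hy) (hfM y hy) (abs_nonneg _) hVS0
      have c4 := abs_add_le ((S x - S y) * f y) (q x - q y)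
      have c5 := hVq x hx y hy
      have c6 := hmemB x hx y hy
      nlinarith
    rcases eq_or_lt_of_le hsinf0 with h0 | hpos
    · have : 0 ≤ M * VS + Vq := by positivity
      rw [← h0]
      nlinarith
    · have hdiv : osc f (Set.Icc a b)
          ≤ (osc (fun x => f (L x)) (Set.Icc a b) + (M * VS + Vq)) / sinf := by
        rw [hAdef]
        apply Real.sSup_le
        · rintro x ⟨⟨x1, x2⟩, ⟨h1, h2⟩, rfl⟩
          rw [le_div_iff₀ hpos]
          have := keyl x1 h1 x2 h2
          nlinarith
        · have : 0 ≤ M * VS + Vq := by positivity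
          positivity
      rw [le_div_iff₀ hpos] at hdiv
      nlinarith
  · rw [hBdef]
    apply Real.sSup_le
    · rintro x ⟨⟨x1, x2⟩, ⟨h1, h2⟩, rfl⟩
      exact key x1 h1 x2 h2
    · have h1 : 0 ≤ M * VS + Vq := by positivity
      nlinarith

/-- If `f ∘ L = S·f + q` on `D = [c,d]`, with `L` an affine bijection, `f` bounded, `S, q`
continuous of bounded variation with `|S| < 1`, then for any subinterval `J = [u,v] ⊆ D`,
with `s̄ = max_J |S|` and `s̲ = min_J |S|`, every uniform `T`-adic oscillation sum satisfies
`s̲·O_p(f,J) − ξ ≤ O_p(f, L(J)) ≤ s̄·O_p(f,J) + ξ` where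
`ξ = 2 M_{f,J} Var(S,J) + Var(q,J)`. -/
theorem oscSum_image_estimate (L S q f : ℝ → ℝ) (c d : ℝ) (hcd : c ≤ d)
    (α β : ℝ) (hα : α ≠ 0) (hL : ∀ x, L x = α * x + β)
    (heq : ∀ x ∈ Set.Icc c d, f (L x) = S x * f x + q x)
    (hf : ∃ M, ∀ x ∈ Set.Icc c d, |f x| ≤ M)
    (hS : ContinuousOn S (Set.Icc c d)) (hq : ContinuousOn q (Set.Icc c d))
    (hS1 : ∀ x ∈ Set.Icc c d, |S x| < 1)
    (hSV : eVariationOn S (Set.Icc c d) ≠ ⊤)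
    (hqV : eVariationOn q (Set.Icc c d) ≠ ⊤)
    (u v : ℝ) (huv : u ≤ v) (hJ : Set.Icc u v ⊆ Set.Icc c d)
    (u' v' : ℝ) (hLJ : L '' Set.Icc u v = Set.Icc u' v')
    (sbar sinf : ℝ)
    (hsbar : IsGreatest ((fun x => |S x|) '' Set.Icc u v) sbar)
    (hsinf : IsLeast ((fun x => |S x|) '' Set.Icc u v) sinf)
    (T : ℕ) (hT : 2 ≤ T) (p : ℕ) :
    sinf * oscSum f u v T p -
        (2 * sSup ((fun t => |f t|) '' Set.Icc u v) * (eVariationOn S (Set.Icc u v)).toReal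
          + (eVariationOn q (Set.Icc u v)).toReal) ≤ oscSum f u' v' T p ∧
      oscSum f u' v' T p ≤ sbar * oscSum f u v T p +
        (2 * sSup ((fun t => |f t|) '' Set.Icc u v) * (eVariationOn S (Set.Icc u v)).toReal
          + (eVariationOn q (Set.Icc u v)).toReal) := by
  have hLeq : L = fun x => α * x + β := funext hL
  have hT0 : (0:ℝ) < (T:ℝ) := by exact_mod_cast (by omega : 0 < T)
  have hTp0 : (0:ℝ) < (T:ℝ) ^ p := pow_pos hT0 p
  set n := T ^ p with hn
  have hncast : ((n : ℕ) : ℝ) = (T:ℝ) ^ p := by rw [hn]; push_cast; ring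
  set a : ℕ → ℝ := fun ℓ => u + (ℓ : ℝ) * (v - u) / (T : ℝ) ^ p with ha
  have ha0 : a 0 = u := by simp [ha]
  have han : a n = v := by
    simp only [ha]
    rw [hncast]
    field_simp
    ring
  have hainc : ∀ ℓ : ℕ, a ℓ ≤ a (ℓ + 1) := by
    intro ℓ
    simp only [ha]
    push_cast
    have h1 : ((ℓ:ℝ) + 1) * (v - u) / (T:ℝ) ^ p - (ℓ:ℝ) * (v - u) / (T:ℝ) ^ p
        = (v - u) / (T:ℝ) ^ p := by ring
    have h2 : 0 ≤ (v - u) / (T:ℝ) ^ p := div_nonneg (by linarith) hTp0.le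
    linarith
  have hamono : Monotone a := monotone_nat_of_le_succ hainc
  have hasucc : ∀ ℓ : ℕ, a (ℓ + 1) = u + ((ℓ : ℝ) + 1) * (v - u) / (T : ℝ) ^ p := by
    intro ℓ; simp only [ha]; push_cast; ring
  have hsub : ∀ ℓ, ℓ < n → Set.Icc (a ℓ) (a (ℓ + 1)) ⊆ Set.Icc u v := by
    intro ℓ hℓ
    apply Set.Icc_subset_Icc
    · rw [← ha0]; exact hamono (Nat.zero_le ℓ)
    · rw [← han]; exact hamono (by omega : ℓ + 1 ≤ n)
  -- boundedness facts
  obtain ⟨M0, hM0⟩ := hf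
  set M := sSup ((fun t => |f t|) '' Set.Icc u v) with hM
  have huvmem : u ∈ Set.Icc u v := Set.left_mem_Icc.2 huv
  have hMbdd : BddAbove ((fun t => |f t|) '' Set.Icc u v) :=
    ⟨M0, by rintro x ⟨t, ht, rfl⟩; exact hM0 t (hJ ht)⟩
  have hfM : ∀ x ∈ Set.Icc u v, |f x| ≤ M := fun x hx => le_csSup hMbdd ⟨x, hx, rfl⟩
  have hM0' : 0 ≤ M := (abs_nonneg (f u)).trans (hfM u huvmem)
  have hsbar' : ∀ x ∈ Set.Icc u v, |S x| ≤ sbar := fun x hx => hsbar.2 ⟨x, hx, rfl⟩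
  have hsinf' : ∀ x ∈ Set.Icc u v, sinf ≤ |S x| := fun x hx => hsinf.2 ⟨x, hx, rfl⟩
  have hsinf0 : 0 ≤ sinf := by
    obtain ⟨x, hx, he⟩ := hsinf.1
    exact le_of_le_of_eq (abs_nonneg (S x)) he
  -- variation facts
  have hSVuv : eVariationOn S (Set.Icc u v) ≠ ⊤ := by
    intro h
    exact hSV (top_unique (h ▸ eVariationOn.mono S hJ))
  have hqVuv : eVariationOn q (Set.Icc u v) ≠ ⊤ := by
    intro h
    exact hqV (top_unique (h ▸ eVariationOn.mono q hJ))
  have hVSfin : ∀ ℓ, ℓ < n → eVariationOn S (Set.Icc (a ℓ) (a (ℓ + 1))) ≠ ⊤ := by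
    intro ℓ hℓ h
    exact hSVuv (top_unique (h ▸ eVariationOn.mono S (hsub ℓ hℓ)))
  have hVqfin : ∀ ℓ, ℓ < n → eVariationOn q (Set.Icc (a ℓ) (a (ℓ + 1))) ≠ ⊤ := by
    intro ℓ hℓ h
    exact hqVuv (top_unique (h ▸ eVariationOn.mono q (hsub ℓ hℓ)))
  have hVSpt : ∀ ℓ, ℓ < n → ∀ x ∈ Set.Icc (a ℓ) (a (ℓ + 1)), ∀ y ∈ Set.Icc (a ℓ) (a (ℓ + 1)),
      |S x - S y| ≤ (eVariationOn S (Set.Icc (a ℓ) (a (ℓ + 1)))).toReal := by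
    intro ℓ hℓ x hx y hy
    have h1 := eVariationOn.edist_le S hx hy
    rw [edist_dist] at h1
    have h2 := (ENNReal.ofReal_le_iff_le_toReal (hVSfin ℓ hℓ)).1 h1
    rwa [Real.dist_eq] at h2
  have hVqpt : ∀ ℓ, ℓ < n → ∀ x ∈ Set.Icc (a ℓ) (a (ℓ + 1)), ∀ y ∈ Set.Icc (a ℓ) (a (ℓ + 1)),
      |q x - q y| ≤ (eVariationOn q (Set.Icc (a ℓ) (a (ℓ + 1)))).toReal := by
    intro ℓ hℓ x hx y hy
    have h1 := eVariationOn.edist_le q hx hy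
    rw [edist_dist] at h1
    have h2 := (ENNReal.ofReal_le_iff_le_toReal (hVqfin ℓ hℓ)).1 h1
    rwa [Real.dist_eq] at h2
  -- sums of variations
  have hSsum : ∑ ℓ ∈ Finset.range n, (eVariationOn S (Set.Icc (a ℓ) (a (ℓ + 1)))).toReal
      = (eVariationOn S (Set.Icc u v)).toReal := by
    rw [← ENNReal.toReal_sum (fun ℓ hℓ => hVSfin ℓ (Finset.mem_range.1 hℓ))]
    congr 1
    rw [evar_sum' S a hainc n, ha0, han]
  have hqsum : ∑ ℓ ∈ Finset.range n, (eVariationOn q (Set.Icc (a ℓ) (a (ℓ + 1)))).toReal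
      = (eVariationOn q (Set.Icc u v)).toReal := by
    rw [← ENNReal.toReal_sum (fun ℓ hℓ => hVqfin ℓ (Finset.mem_range.1 hℓ))]
    congr 1
    rw [evar_sum' q a hainc n, ha0, han]
  -- per-interval analytic bounds
  have hcore : ∀ ℓ, ℓ < n →
      sinf * osc f (Set.Icc (a ℓ) (a (ℓ + 1)))
          - (M * (eVariationOn S (Set.Icc (a ℓ) (a (ℓ + 1)))).toReal
            + (eVariationOn q (Set.Icc (a ℓ) (a (ℓ + 1)))).toReal)
        ≤ osc (fun x => f (L x)) (Set.Icc (a ℓ) (a (ℓ + 1)))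
      ∧ osc (fun x => f (L x)) (Set.Icc (a ℓ) (a (ℓ + 1)))
        ≤ sbar * osc f (Set.Icc (a ℓ) (a (ℓ + 1)))
          + (M * (eVariationOn S (Set.Icc (a ℓ) (a (ℓ + 1)))).toReal
            + (eVariationOn q (Set.Icc (a ℓ) (a (ℓ + 1)))).toReal) := by
    intro ℓ hℓ
    exact osc_comp_bounds L S q f M sbar sinf _ _ hM0' hsinf0 ENNReal.toReal_nonneg
      ENNReal.toReal_nonneg (a ℓ) (a (ℓ + 1)) (hainc ℓ)
      (fun x hx => hfM x (hsub ℓ hℓ hx))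
      (fun x hx => heq x (hJ (hsub ℓ hℓ hx)))
      (fun x hx => hsbar' x (hsub ℓ hℓ hx))
      (fun x hx => hsinf' x (hsub ℓ hℓ hx))
      (hVSpt ℓ hℓ) (hVqpt ℓ hℓ)
  -- rewriting the oscillation sums
  have hBsum : oscSum f u v T p = ∑ ℓ ∈ Finset.range n, osc f (Set.Icc (a ℓ) (a (ℓ + 1))) := by
    unfold oscSum
    rw [← hn]
    refine Finset.sum_congr rfl (fun ℓ _ => ?_)
    rw [hasucc ℓ]
  have hAsum : oscSum f u' v' T p
      = ∑ ℓ ∈ Finset.range n, osc (fun x => f (L x)) (Set.Icc (a ℓ) (a (ℓ + 1))) := by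
    rcases lt_or_gt_of_ne hα with hneg | hpos
    · -- α < 0
      have h1 : α * v + β ≤ α * u + β := by nlinarith
      have him : Set.Icc (α * v + β) (α * u + β) = Set.Icc u' v' := by
        rw [← hLJ, hLeq, image_affine_Icc_neg hneg]
      have hne' : (Set.Icc u' v').Nonempty := by rw [← him]; exact Set.nonempty_Icc.2 h1
      have hu'v' : u' ≤ v' := Set.nonempty_Icc.1 hne'
      have hu' : u' = α * v + β := by
        have h2 := congrArg sInf him
        rw [csInf_Icc h1, csInf_Icc hu'v'] at h2
        exact h2.symm
      have hv' : v' = α * u + β := by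
        have h2 := congrArg sSup him
        rw [csSup_Icc h1, csSup_Icc hu'v'] at h2
        exact h2.symm
      unfold oscSum
      rw [← hn]
      conv_rhs => rw [← Finset.sum_range_reflect]
      refine Finset.sum_congr rfl (fun k hk => ?_)
      rw [Finset.mem_range] at hk
      have hidx : n - 1 - k + 1 = n - k := by omega
      have hc1 : ((n - 1 - k : ℕ) : ℝ) = (T:ℝ) ^ p - 1 - (k:ℝ) := by
        rw [Nat.cast_sub (by omega : k ≤ n - 1), Nat.cast_sub (by omega : 1 ≤ n),
          Nat.cast_one, hncast]
      have hc2 : ((n - k : ℕ) : ℝ) = (T:ℝ) ^ p - (k:ℝ) := by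
        rw [Nat.cast_sub (by omega : k ≤ n), hncast]
      have himg : Set.Icc (u' + (k : ℝ) * (v' - u') / (T : ℝ) ^ p)
          (u' + ((k : ℝ) + 1) * (v' - u') / (T : ℝ) ^ p)
          = L '' Set.Icc (a (n - 1 - k)) (a (n - 1 - k + 1)) := by
        rw [hLeq, image_affine_Icc_neg hneg, hidx]
        simp only [ha]
        rw [hc1, hc2, hu', hv']
        have hTne : ((T:ℝ) ^ p) ≠ 0 := hTp0.ne'
        congr 1 <;> (field_simp; ring)
      rw [himg, osc_image]
    · -- α > 0
      have h1 : α * u + β ≤ α * v + β := by nlinarith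
      have him : Set.Icc (α * u + β) (α * v + β) = Set.Icc u' v' := by
        rw [← hLJ, hLeq, Set.image_affine_Icc' hpos]
      have hne' : (Set.Icc u' v').Nonempty := by rw [← him]; exact Set.nonempty_Icc.2 h1
      have hu'v' : u' ≤ v' := Set.nonempty_Icc.1 hne'
      have hu' : u' = α * u + β := by
        have h2 := congrArg sInf him
        rw [csInf_Icc h1, csInf_Icc hu'v'] at h2
        exact h2.symm
      have hv' : v' = α * v + β := by
        have h2 := congrArg sSup him
        rw [csSup_Icc h1, csSup_Icc hu'v'] at h2
        exact h2.symm
      unfold oscSum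
      rw [← hn]
      refine Finset.sum_congr rfl (fun k _ => ?_)
      have himg : Set.Icc (u' + (k : ℝ) * (v' - u') / (T : ℝ) ^ p)
          (u' + ((k : ℝ) + 1) * (v' - u') / (T : ℝ) ^ p)
          = L '' Set.Icc (a k) (a (k + 1)) := by
        rw [hLeq, Set.image_affine_Icc' hpos, hasucc]
        simp only [ha]
        rw [hu', hv']
        have hTne : ((T:ℝ) ^ p) ≠ 0 := hTp0.ne'
        congr 1 <;> (field_simp; ring)
      rw [himg, osc_image]
  -- final assembly
  have hMV : 0 ≤ M * (eVariationOn S (Set.Icc u v)).toReal :=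
    mul_nonneg hM0' ENNReal.toReal_nonneg
  constructor
  · rw [hAsum, hBsum]
    have hsum1 := Finset.sum_le_sum (fun ℓ hℓ => (hcore ℓ (Finset.mem_range.1 hℓ)).1)
    have e1 : ∑ ℓ ∈ Finset.range n,
        (sinf * osc f (Set.Icc (a ℓ) (a (ℓ + 1)))
          - (M * (eVariationOn S (Set.Icc (a ℓ) (a (ℓ + 1)))).toReal
            + (eVariationOn q (Set.Icc (a ℓ) (a (ℓ + 1)))).toReal))
        = sinf * ∑ ℓ ∈ Finset.range n, osc f (Set.Icc (a ℓ) (a (ℓ + 1)))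
          - (M * ∑ ℓ ∈ Finset.range n, (eVariationOn S (Set.Icc (a ℓ) (a (ℓ + 1)))).toReal
            + ∑ ℓ ∈ Finset.range n, (eVariationOn q (Set.Icc (a ℓ) (a (ℓ + 1)))).toReal) := by
      rw [Finset.sum_sub_distrib, Finset.sum_add_distrib, Finset.mul_sum, Finset.mul_sum]
    rw [e1, hSsum, hqsum] at hsum1
    linarith
  · rw [hAsum, hBsum]
    have hsum1 := Finset.sum_le_sum (fun ℓ hℓ => (hcore ℓ (Finset.mem_range.1 hℓ)).2)
    have e1 : ∑ ℓ ∈ Finset.range n,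
        (sbar * osc f (Set.Icc (a ℓ) (a (ℓ + 1)))
          + (M * (eVariationOn S (Set.Icc (a ℓ) (a (ℓ + 1)))).toReal
            + (eVariationOn q (Set.Icc (a ℓ) (a (ℓ + 1)))).toReal))
        = sbar * ∑ ℓ ∈ Finset.range n, osc f (Set.Icc (a ℓ) (a (ℓ + 1)))
          + (M * ∑ ℓ ∈ Finset.range n, (eVariationOn S (Set.Icc (a ℓ) (a (ℓ + 1)))).toReal
            + ∑ ℓ ∈ Finset.range n, (eVariationOn q (Set.Icc (a ℓ) (a (ℓ + 1)))).toReal) := by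
      rw [Finset.sum_add_distrib, Finset.sum_add_distrib, Finset.mul_sum, Finset.mul_sum]
    rw [e1, hSsum, hqsum] at hsum1
    linarith
end

section
/- Let g be a continuous function on a closed interval J = [a,b] with a < b, T ≥ 2 an integer, and ε_p = (b−a)/T^p. Then for all p ≥ 1, max{T^p, ε_p^{-1} O_p(g,J)} ≤ N_{ε_p}(Γg) ≤ ε_p^{-1} O_p(g,J) + 2 T^p, where N_{ε}(Γg) is the minimum number of ε-coordinate squares of the grid anchored at (a,0) needed to cover the graph of g. -/
/-- The `ε`-coordinate square `[k₁ε,(k₁+1)ε] × [k₂ε,(k₂+1)ε]`. -/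
def gridSquare (ε : ℝ) (k : ℤ × ℤ) : Set (ℝ × ℝ) :=
  Set.Icc ((k.1 : ℝ) * ε) (((k.1 : ℝ) + 1) * ε) ×ˢ
    Set.Icc ((k.2 : ℝ) * ε) (((k.2 : ℝ) + 1) * ε)

/-- The least number of `ε`-coordinate squares needed to cover `E`. -/
noncomputable def coverNum (E : Set (ℝ × ℝ)) (ε : ℝ) : ℕ :=
  sInf {m | ∃ s : Finset (ℤ × ℤ), s.card = m ∧ E ⊆ ⋃ k ∈ s, gridSquare ε k}

/-- The upper box dimension of a bounded set `E ⊆ ℝ²`, defined via counts of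
`ε`-coordinate squares covering `E` as `ε → 0⁺`. -/
noncomputable def uboxDim (E : Set (ℝ × ℝ)) : ℝ :=
  Filter.limsup (fun ε : ℝ => Real.log (coverNum E ε) / Real.log (1 / ε))
    (nhdsWithin 0 (Set.Ioi (0 : ℝ)))

/-- The lower box dimension of a bounded set `E ⊆ ℝ²`, defined via counts of
`ε`-coordinate squares covering `E` as `ε → 0⁺`. -/
noncomputable def lboxDim (E : Set (ℝ × ℝ)) : ℝ :=
  Filter.liminf (fun ε : ℝ => Real.log (coverNum E ε) / Real.log (1 / ε))
    (nhdsWithin 0 (Set.Ioi (0 : ℝ)))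

/-- The graph of `g` restricted to `s`. -/
def graphOn (g : ℝ → ℝ) (s : Set ℝ) : Set (ℝ × ℝ) :=
  (fun x => (x, g x)) '' s

/-- A generalized `ε`-coordinate square with center `(a,0)`:
`[a+k₁ε, a+(k₁+1)ε] × [k₂ε, (k₂+1)ε]`. -/
def gridSquareA (a ε : ℝ) (k : ℤ × ℤ) : Set (ℝ × ℝ) :=
  Set.Icc (a + (k.1 : ℝ) * ε) (a + ((k.1 : ℝ) + 1) * ε) ×ˢ
    Set.Icc ((k.2 : ℝ) * ε) (((k.2 : ℝ) + 1) * ε)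

/-- The least number of generalized `ε`-coordinate squares with center `(a,0)` needed
to cover `E`. -/
noncomputable def coverNumA (a : ℝ) (E : Set (ℝ × ℝ)) (ε : ℝ) : ℕ :=
  sInf {m | ∃ s : Finset (ℤ × ℤ), s.card = m ∧ E ⊆ ⋃ k ∈ s, gridSquareA a ε k}

set_option maxHeartbeats 1000000

open Set hiding graphOn

private lemma osc_eq_sub {g : ℝ → ℝ} {s : Set ℝ} (hs : IsCompact s) (hne : s.Nonempty)
    (hg : ContinuousOn g s) :
    osc g s = sSup (g '' s) - sInf (g '' s) := by
  obtain ⟨xM, hxM, hMax⟩ := hs.exists_isMaxOn hne hg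
  obtain ⟨xm, hxm, hMin⟩ := hs.exists_isMinOn hne hg
  have himg : IsCompact (g '' s) := hs.image_of_continuousOn hg
  have hMs : sSup (g '' s) = g xM := by
    apply le_antisymm
    · exact csSup_le (hne.image g) (by rintro _ ⟨x, hx, rfl⟩; exact hMax hx)
    · exact le_csSup himg.bddAbove ⟨xM, hxM, rfl⟩
  have hms : sInf (g '' s) = g xm := by
    apply le_antisymm
    · exact csInf_le himg.bddBelow ⟨xm, hxm, rfl⟩
    · exact le_csInf (hne.image g) (by rintro _ ⟨x, hx, rfl⟩; exact hMin hx)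
  have hcont : ContinuousOn (fun p : ℝ × ℝ => |g p.1 - g p.2|) (s ×ˢ s) :=
    (((hg.comp continuousOn_fst fun p hp => hp.1).sub
      (hg.comp continuousOn_snd fun p hp => hp.2)).abs)
  have himg2 : IsCompact ((fun p : ℝ × ℝ => |g p.1 - g p.2|) '' (s ×ˢ s)) :=
    (hs.prod hs).image_of_continuousOn hcont
  rw [hMs, hms]
  apply le_antisymm
  · apply csSup_le ((hne.prod hne).image _)
    rintro _ ⟨⟨x, y⟩, ⟨hx, hy⟩, rfl⟩
    have h1 : g x ≤ g xM := hMax hx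
    have h2 : g xm ≤ g y := hMin hy
    have h3 : g y ≤ g xM := hMax hy
    have h4 : g xm ≤ g x := hMin hx
    rw [abs_sub_le_iff]; constructor <;> linarith
  · calc g xM - g xm ≤ |g xM - g xm| := le_abs_self _
    _ ≤ _ := le_csSup himg2.bddAbove ⟨(xM, xm), ⟨hxM, hxm⟩, rfl⟩

private lemma exists_subinterval {a ε : ℝ} (hε : 0 < ε) {n : ℕ} (hn : 1 ≤ n) {x : ℝ}
    (hx : x ∈ Icc a (a + n * ε)) :
    ∃ ℓ < n, x ∈ Icc (a + ℓ * ε) (a + ((ℓ : ℝ) + 1) * ε) := by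
  obtain ⟨hx1, hx2⟩ := hx
  set t := (x - a) / ε with ht
  have ht0 : 0 ≤ t := div_nonneg (by linarith) hε.le
  have htn : t ≤ n := by
    rw [ht, div_le_iff₀ hε]; linarith
  have hxt : x = a + t * ε := by rw [ht, div_mul_cancel₀ _ hε.ne']; ring
  by_cases h : t < n
  · refine ⟨⌊t⌋.toNat, ?_, ?_, ?_⟩
    · have h1 : (⌊t⌋ : ℝ) ≤ t := Int.floor_le t
      have h2 : (0:ℤ) ≤ ⌊t⌋ := Int.floor_nonneg.mpr ht0
      have h3 : (⌊t⌋.toNat : ℝ) ≤ t := by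
        rw [← Int.toNat_of_nonneg h2] at h1; exact_mod_cast h1
      have : (⌊t⌋.toNat : ℝ) < n := lt_of_le_of_lt h3 h
      exact_mod_cast this
    · have h1 : (⌊t⌋ : ℝ) ≤ t := Int.floor_le t
      have h2 : (0:ℤ) ≤ ⌊t⌋ := Int.floor_nonneg.mpr ht0
      have h3 : (⌊t⌋.toNat : ℝ) ≤ t := by
        rw [← Int.toNat_of_nonneg h2] at h1; exact_mod_cast h1
      rw [hxt]; nlinarith
    · have h1 : t < ⌊t⌋ + 1 := Int.lt_floor_add_one t
      have h2 : (0:ℤ) ≤ ⌊t⌋ := Int.floor_nonneg.mpr ht0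
      have h3 : t < (⌊t⌋.toNat : ℝ) + 1 := by
        rw [← Int.toNat_of_nonneg h2] at h1; exact_mod_cast h1
      rw [hxt]; nlinarith
  · refine ⟨n - 1, by omega, ?_, ?_⟩
    · have hc : ((n - 1 : ℕ) : ℝ) = (n : ℝ) - 1 := by
        have : (1:ℕ) ≤ n := hn
        push_cast [Nat.cast_sub this]; ring
      have htn' : t = n := le_antisymm htn (not_lt.mp h)
      rw [hxt, htn', hc]; nlinarith
    · have hc : ((n - 1 : ℕ) : ℝ) = (n : ℝ) - 1 := by
        have : (1:ℕ) ≤ n := hn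
        push_cast [Nat.cast_sub this]; ring
      have htn' : t = n := le_antisymm htn (not_lt.mp h)
      rw [hxt, htn', hc]; nlinarith

/-- Two-sided estimate of the covering number of a graph by oscillation sums. -/
theorem coverNum_graph_estimate (g : ℝ → ℝ) (a b : ℝ) (hab : a < b)
    (T : ℕ) (hT : 2 ≤ T) (hg : ContinuousOn g (Set.Icc a b)) (p : ℕ) (hp : 1 ≤ p) :
    max ((T : ℝ) ^ p) (((b - a) / (T : ℝ) ^ p)⁻¹ * oscSum g a b T p) ≤
        (coverNumA a (graphOn g (Set.Icc a b)) ((b - a) / (T : ℝ) ^ p) : ℝ) ∧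
      (coverNumA a (graphOn g (Set.Icc a b)) ((b - a) / (T : ℝ) ^ p) : ℝ) ≤
        ((b - a) / (T : ℝ) ^ p)⁻¹ * oscSum g a b T p + 2 * (T : ℝ) ^ p := by
  have hTpos : (0:ℝ) < (T:ℝ)^p := by positivity
  set ε : ℝ := (b - a) / (T:ℝ)^p with hεdef
  set n : ℕ := T ^ p with hndef
  have hεpos : 0 < ε := div_pos (by linarith) hTpos
  have hncast : (n : ℝ) = (T:ℝ)^p := by push_cast [hndef]; ring
  have hn1 : 1 ≤ n := Nat.one_le_iff_ne_zero.mpr (by positivity)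
  have hnε : a + (n:ℝ) * ε = b := by
    rw [hncast, hεdef]; field_simp; ring
  -- the subintervals
  set J : ℕ → Set ℝ := fun ℓ => Icc (a + ℓ * ε) (a + ((ℓ:ℝ) + 1) * ε) with hJdef
  have hJsub : ∀ ℓ < n, J ℓ ⊆ Icc a b := by
    intro ℓ hℓ
    apply Icc_subset_Icc
    · nlinarith [Nat.cast_nonneg (α := ℝ) ℓ]
    · have : (ℓ:ℝ) + 1 ≤ n := by exact_mod_cast hℓ
      nlinarith
  have hJne : ∀ ℓ : ℕ, (J ℓ).Nonempty := fun ℓ => nonempty_Icc.mpr (by nlinarith)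
  set M : ℕ → ℝ := fun ℓ => sSup (g '' J ℓ) with hMdef
  set m : ℕ → ℝ := fun ℓ => sInf (g '' J ℓ) with hmdef
  have hosc : ∀ ℓ < n, osc g (J ℓ) = M ℓ - m ℓ := fun ℓ hℓ =>
    osc_eq_sub isCompact_Icc (hJne ℓ) (hg.mono (hJsub ℓ hℓ))
  have hgJ : ∀ ℓ, ℓ < n → ∀ x ∈ J ℓ, m ℓ ≤ g x ∧ g x ≤ M ℓ := by
    intro ℓ hℓ x hx
    have hcomp : IsCompact (g '' J ℓ) :=
      isCompact_Icc.image_of_continuousOn (hg.mono (hJsub ℓ hℓ))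
    exact ⟨csInf_le hcomp.bddBelow ⟨x, hx, rfl⟩, le_csSup hcomp.bddAbove ⟨x, hx, rfl⟩⟩
  have hmM : ∀ ℓ < n, m ℓ ≤ M ℓ := by
    intro ℓ hℓ
    obtain ⟨x, hx⟩ := hJne ℓ
    obtain ⟨h1, h2⟩ := hgJ ℓ hℓ x hx
    linarith
  have hoscSum : oscSum g a b T p = ∑ ℓ ∈ Finset.range n, (M ℓ - m ℓ) := by
    rw [oscSum, ← hndef]
    apply Finset.sum_congr rfl
    intro ℓ hℓ
    rw [← hosc ℓ (Finset.mem_range.mp hℓ)]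
    congr 2 <;> simp only [mul_div_assoc, ← hεdef]
  -- the explicit cover
  set K : ℕ → Finset ℤ := fun ℓ => Finset.Icc ⌊m ℓ / ε⌋ ⌊M ℓ / ε⌋ with hKdef
  set s : Finset (ℤ × ℤ) :=
    (Finset.range n).biUnion (fun ℓ => (K ℓ).image fun k₂ => ((ℓ:ℤ), k₂)) with hsdef
  have hcover : graphOn g (Icc a b) ⊆ ⋃ k ∈ s, gridSquareA a ε k := by
    rintro _ ⟨x, hx, rfl⟩
    rw [← hnε] at hx
    obtain ⟨ℓ, hℓ, hxJ⟩ := exists_subinterval hεpos hn1 hx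
    obtain ⟨hm1, hm2⟩ := hgJ ℓ hℓ x hxJ
    refine mem_iUnion₂.mpr ⟨((ℓ:ℤ), ⌊g x / ε⌋), ?_, ?_, ?_⟩
    · rw [hsdef]
      refine Finset.mem_biUnion.mpr ⟨ℓ, Finset.mem_range.mpr hℓ, ?_⟩
      refine Finset.mem_image.mpr ⟨⌊g x / ε⌋, ?_, rfl⟩
      rw [hKdef]; simp only [Finset.mem_Icc]
      constructor <;> apply Int.floor_le_floor <;> gcongr <;> assumption
    · simpa using hxJ
    · simp only [mem_Icc]
      constructor
      · calc (⌊g x / ε⌋ : ℝ) * ε ≤ (g x / ε) * ε := by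
              gcongr; exact Int.floor_le _
          _ = g x := by field_simp
      · calc g x = (g x / ε) * ε := by field_simp
          _ ≤ ((⌊g x / ε⌋ : ℝ) + 1) * ε := by
              gcongr; exact (Int.lt_floor_add_one _).le
  have hNmem : coverNumA a (graphOn g (Icc a b)) ε ∈
      {m_1 | ∃ s : Finset (ℤ × ℤ), s.card = m_1 ∧
        graphOn g (Icc a b) ⊆ ⋃ k ∈ s, gridSquareA a ε k} :=
    Nat.sInf_mem ⟨s.card, s, rfl, hcover⟩
  set N := coverNumA a (graphOn g (Icc a b)) ε with hNdef
  -- upper bound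
  have hupper : (N : ℝ) ≤ ε⁻¹ * oscSum g a b T p + 2 * (T:ℝ)^p := by
    have hle : N ≤ s.card := Nat.sInf_le ⟨s, rfl, hcover⟩
    have hcard : (s.card : ℝ) ≤ ∑ ℓ ∈ Finset.range n, ((M ℓ - m ℓ) / ε + 2) := by
      calc (s.card : ℝ) ≤ ((∑ ℓ ∈ Finset.range n, ((K ℓ).image fun k₂ => ((ℓ:ℤ), k₂)).card : ℕ) : ℝ) := by
            exact_mod_cast Finset.card_biUnion_le
        _ ≤ _ := by
            push_cast
            apply Finset.sum_le_sum
            intro ℓ hℓ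
            have hℓn := Finset.mem_range.mp hℓ
            calc ((((K ℓ).image fun k₂ => ((ℓ:ℤ), k₂)).card : ℕ) : ℝ)
                ≤ ((K ℓ).card : ℝ) := by exact_mod_cast Finset.card_image_le
              _ ≤ (M ℓ - m ℓ) / ε + 2 := by
                  rw [hKdef, Int.card_Icc]
                  have hfl : ⌊m ℓ / ε⌋ ≤ ⌊M ℓ / ε⌋ :=
                    Int.floor_le_floor (by gcongr; exact hmM ℓ hℓn)
                  have h1 : ((⌊M ℓ / ε⌋ + 1 - ⌊m ℓ / ε⌋).toNat : ℝ)
                      = (⌊M ℓ / ε⌋ : ℝ) + 1 - ⌊m ℓ / ε⌋ := by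
                    have h0 : ((⌊M ℓ / ε⌋ + 1 - ⌊m ℓ / ε⌋).toNat : ℤ)
                        = ⌊M ℓ / ε⌋ + 1 - ⌊m ℓ / ε⌋ := Int.toNat_of_nonneg (by omega)
                    exact_mod_cast congrArg (fun z : ℤ => (z : ℝ)) h0
                  rw [h1]
                  have h2 : (⌊M ℓ / ε⌋ : ℝ) ≤ M ℓ / ε := Int.floor_le _
                  have h3 : m ℓ / ε - 1 < (⌊m ℓ / ε⌋ : ℝ) := by
                    have := Int.lt_floor_add_one (m ℓ / ε); linarith
                  have h4 : (M ℓ - m ℓ) / ε = M ℓ / ε - m ℓ / ε := by ring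
                  linarith
    rw [hoscSum]
    have : (N : ℝ) ≤ (s.card : ℝ) := by exact_mod_cast hle
    calc (N:ℝ) ≤ ∑ ℓ ∈ Finset.range n, ((M ℓ - m ℓ) / ε + 2) := le_trans this hcard
      _ = ε⁻¹ * ∑ ℓ ∈ Finset.range n, (M ℓ - m ℓ) + 2 * (T:ℝ)^p := by
          rw [Finset.sum_add_distrib, ← Finset.sum_div, Finset.sum_const,
            Finset.card_range, nsmul_eq_mul, hncast, div_eq_inv_mul,
            mul_comm ((T:ℝ)^p) 2]
  refine ⟨?_, hupper⟩
  -- lower bounds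
  obtain ⟨S, hScard, hScover⟩ := hNmem
  -- part 1 : n ≤ S.card
  have hfst : ∀ (ℓ : ℕ) (k : ℤ × ℤ) (z : ℝ), ℓ < n → k ∈ S →
      a + ℓ * ε < z → z < a + ((ℓ:ℝ) + 1) * ε →
      ((z, g z) : ℝ × ℝ) ∈ gridSquareA a ε k → k.1 = (ℓ : ℤ) := by
    intro ℓ k z hℓ hkS hz1 hz2 hmem
    simp only [gridSquareA, Set.mem_prod, mem_Icc] at hmem
    obtain ⟨⟨h1, h2⟩, -⟩ := hmem
    have hc1 : (k.1 : ℝ) < (ℓ:ℝ) + 1 := by nlinarith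
    have hc2 : (ℓ : ℝ) < (k.1 : ℝ) + 1 := by nlinarith
    have d1 : k.1 < (ℓ:ℤ) + 1 := by exact_mod_cast hc1
    have d2 : (ℓ:ℤ) < k.1 + 1 := by exact_mod_cast hc2
    omega
  have hmid : ∀ ℓ < n, (a + ℓ*ε + ε/2) ∈ Icc a b := by
    intro ℓ hℓ
    have hc : (ℓ:ℝ) + 1 ≤ n := by exact_mod_cast hℓ
    constructor
    · nlinarith [Nat.cast_nonneg (α := ℝ) ℓ]
    · rw [← hnε]; nlinarith
  have hn_le : n ≤ S.card := by
    have hex : ∀ ℓ : ℕ, ∃ k : ℤ × ℤ, ℓ < n → k ∈ S ∧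
        ((a + ℓ*ε + ε/2, g (a + ℓ*ε + ε/2)) : ℝ × ℝ) ∈ gridSquareA a ε k := by
      intro ℓ
      by_cases hℓ : ℓ < n
      · obtain ⟨k, hkS, hkmem⟩ := mem_iUnion₂.mp (hScover ⟨_, hmid ℓ hℓ, rfl⟩)
        exact ⟨k, fun _ => ⟨hkS, hkmem⟩⟩
      · exact ⟨(0, 0), fun h => absurd h hℓ⟩
    choose f hf using hex
    have hinj : Set.InjOn f (Finset.range n) := by
      intro ℓ hℓ ℓ' hℓ' heq
      have hℓn := Finset.mem_range.mp hℓ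
      have hℓn' := Finset.mem_range.mp hℓ'
      have e1 : (f ℓ).1 = (ℓ : ℤ) :=
        hfst ℓ (f ℓ) (a + ℓ*ε + ε/2) hℓn (hf ℓ hℓn).1 (by linarith) (by linarith)
          (hf ℓ hℓn).2
      have e2 : (f ℓ').1 = (ℓ' : ℤ) :=
        hfst ℓ' (f ℓ') (a + ℓ'*ε + ε/2) hℓn' (hf ℓ' hℓn').1 (by linarith) (by linarith)
          (hf ℓ' hℓn').2
      rw [heq, e2] at e1
      exact_mod_cast e1.symm
    have := Finset.card_le_card_of_injOn f
      (fun ℓ hℓ => (hf ℓ (Finset.mem_range.mp hℓ)).1) hinj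
    simpa using this
  -- part 2 : the oscillation bound
  have hkey : ∀ ℓ < n, M ℓ - m ℓ ≤ ((S.filter (fun k => k.1 = (ℓ:ℤ))).card : ℝ) * ε := by
    intro ℓ hℓ
    set Sℓ := S.filter (fun k => k.1 = (ℓ:ℤ)) with hSℓdef
    by_cases hmm' : M ℓ ≤ m ℓ
    · have : (0:ℝ) ≤ (Sℓ.card : ℝ) * ε := by positivity
      linarith
    push_neg at hmm'
    set Y : Set ℝ := ⋃ k ∈ Sℓ, Icc ((k.2:ℝ)*ε) (((k.2:ℝ)+1)*ε) with hYdef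
    have hYclosed : IsClosed Y :=
      Sℓ.finite_toSet.isClosed_biUnion (fun k _ => isClosed_Icc)
    have hlt : a + (ℓ:ℝ)*ε < a + ((ℓ:ℝ)+1)*ε := by linarith
    have hIoo : Ioo (a + (ℓ:ℝ)*ε) (a + ((ℓ:ℝ)+1)*ε) ⊆ J ℓ := Ioo_subset_Icc_self
    have hintY : ∀ z ∈ Ioo (a + (ℓ:ℝ)*ε) (a + ((ℓ:ℝ)+1)*ε), g z ∈ Y := by
      intro z hz
      have hzab : z ∈ Icc a b := hJsub ℓ hℓ (hIoo hz)
      obtain ⟨k, hkS, hkmem⟩ := mem_iUnion₂.mp (hScover ⟨z, hzab, rfl⟩)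
      have hk1 : k.1 = (ℓ:ℤ) := hfst ℓ k z hℓ hkS hz.1 hz.2 hkmem
      have hky : g z ∈ Icc ((k.2:ℝ)*ε) (((k.2:ℝ)+1)*ε) := hkmem.2
      exact mem_iUnion₂.mpr ⟨k, Finset.mem_filter.mpr ⟨hkS, hk1⟩, hky⟩
    -- min and max are attained
    have hcomp : IsCompact (g '' J ℓ) :=
      isCompact_Icc.image_of_continuousOn (hg.mono (hJsub ℓ hℓ))
    have hcompne : (g '' J ℓ).Nonempty := (hJne ℓ).image g
    obtain ⟨xm, hxmJ, hgxm⟩ : ∃ x ∈ J ℓ, g x = m ℓ := hcomp.sInf_mem hcompne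
    obtain ⟨xM, hxMJ, hgxM⟩ : ∃ x ∈ J ℓ, g x = M ℓ := hcomp.sSup_mem hcompne
    have hclos : closure (Ioo (a + (ℓ:ℝ)*ε) (a + ((ℓ:ℝ)+1)*ε)) = J ℓ := closure_Ioo hlt.ne
    have hsubY : Ioo (m ℓ) (M ℓ) ⊆ Y := by
      intro t ht
      -- a point of the open interval with value < t
      have hexlt : ∃ x ∈ Ioo (a + (ℓ:ℝ)*ε) (a + ((ℓ:ℝ)+1)*ε), g x < t := by
        haveI hne : (nhdsWithin xm (Ioo (a + (ℓ:ℝ)*ε) (a + ((ℓ:ℝ)+1)*ε))).NeBot :=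
          mem_closure_iff_nhdsWithin_neBot.mp (hclos ▸ hxmJ)
        have htend : Filter.Tendsto g
            (nhdsWithin xm (Ioo (a + (ℓ:ℝ)*ε) (a + ((ℓ:ℝ)+1)*ε))) (nhds (m ℓ)) := by
          rw [← hgxm]
          exact ((hg.mono (hJsub ℓ hℓ)).continuousWithinAt hxmJ).mono hIoo
        have h1 : ∀ᶠ x in nhdsWithin xm _, g x < t :=
          htend.eventually_lt_const (hgxm ▸ ht.1)
        exact ((eventually_mem_nhdsWithin.and h1).exists).imp (fun x hx => ⟨hx.1, hx.2⟩)
      have hexgt : ∃ y ∈ Ioo (a + (ℓ:ℝ)*ε) (a + ((ℓ:ℝ)+1)*ε), t < g y := by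
        haveI hne : (nhdsWithin xM (Ioo (a + (ℓ:ℝ)*ε) (a + ((ℓ:ℝ)+1)*ε))).NeBot :=
          mem_closure_iff_nhdsWithin_neBot.mp (hclos ▸ hxMJ)
        have htend : Filter.Tendsto g
            (nhdsWithin xM (Ioo (a + (ℓ:ℝ)*ε) (a + ((ℓ:ℝ)+1)*ε))) (nhds (M ℓ)) := by
          rw [← hgxM]
          exact ((hg.mono (hJsub ℓ hℓ)).continuousWithinAt hxMJ).mono hIoo
        have h1 : ∀ᶠ x in nhdsWithin xM _, t < g x :=
          htend.eventually_const_lt (hgxM ▸ ht.2)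
        exact ((eventually_mem_nhdsWithin.and h1).exists).imp (fun x hx => ⟨hx.1, hx.2⟩)
      obtain ⟨x, hxI, hxlt⟩ := hexlt
      obtain ⟨y, hyI, hylt⟩ := hexgt
      have huIcc : uIcc x y ⊆ Ioo (a + (ℓ:ℝ)*ε) (a + ((ℓ:ℝ)+1)*ε) :=
        (ordConnected_Ioo).uIcc_subset hxI hyI
      have hcont' : ContinuousOn g (uIcc x y) :=
        (hg.mono (hJsub ℓ hℓ)).mono (huIcc.trans hIoo)
      have htmem : t ∈ uIcc (g x) (g y) :=
        Icc_subset_uIcc ⟨hxlt.le, hylt.le⟩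
      obtain ⟨z, hz, hgz⟩ := intermediate_value_uIcc hcont' htmem
      exact hgz ▸ hintY z (huIcc hz)
    have hIccY : Icc (m ℓ) (M ℓ) ⊆ Y := by
      rw [← closure_Ioo hmm'.ne]
      exact hYclosed.closure_subset_iff.mpr hsubY
    -- volume argument
    have hvol : MeasureTheory.volume (Icc (m ℓ) (M ℓ)) ≤
        ∑ k ∈ Sℓ, MeasureTheory.volume (Icc ((k.2:ℝ)*ε) (((k.2:ℝ)+1)*ε)) :=
      le_trans (MeasureTheory.measure_mono hIccY)
        (MeasureTheory.measure_biUnion_finset_le _ _)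
    have hvolk : ∀ k ∈ Sℓ, MeasureTheory.volume (Icc ((k.2:ℝ)*ε) (((k.2:ℝ)+1)*ε))
        = ENNReal.ofReal ε := by
      intro k _
      rw [Real.volume_Icc]
      congr 1
      ring
    rw [Real.volume_Icc, Finset.sum_congr rfl hvolk, Finset.sum_const,
      nsmul_eq_mul] at hvol
    have hvol2 : ENNReal.ofReal (M ℓ - m ℓ) ≤ ENNReal.ofReal ((Sℓ.card : ℝ) * ε) := by
      rwa [ENNReal.ofReal_mul (by positivity), ENNReal.ofReal_natCast]
    exact (ENNReal.ofReal_le_ofReal_iff (by positivity)).mp hvol2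
  have hsum_le : ∑ ℓ ∈ Finset.range n, (M ℓ - m ℓ) ≤ (S.card : ℝ) * ε := by
    have h2 : ∑ ℓ ∈ Finset.range n, ((S.filter fun k => k.1 = (ℓ:ℤ)).card) ≤ S.card := by
      rw [← Finset.card_biUnion]
      · exact Finset.card_le_card
          (Finset.biUnion_subset.mpr fun ℓ _ => Finset.filter_subset _ _)
      · intro ℓ _ ℓ' _ hne'
        simp only [Finset.disjoint_left, Finset.mem_filter]
        rintro k ⟨-, h1⟩ ⟨-, h2⟩
        have : ℓ = ℓ' := by exact_mod_cast h1.symm.trans h2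
        exact hne' this
    calc ∑ ℓ ∈ Finset.range n, (M ℓ - m ℓ)
        ≤ ∑ ℓ ∈ Finset.range n, ((S.filter fun k => k.1 = (ℓ:ℤ)).card : ℝ) * ε :=
          Finset.sum_le_sum fun ℓ hℓ => hkey ℓ (Finset.mem_range.mp hℓ)
      _ = ((∑ ℓ ∈ Finset.range n, (S.filter fun k => k.1 = (ℓ:ℤ)).card : ℕ) : ℝ) * ε := by
          rw [← Finset.sum_mul]; push_cast; ring
      _ ≤ (S.card : ℝ) * ε := by
          have : ((∑ ℓ ∈ Finset.range n, (S.filter fun k => k.1 = (ℓ:ℤ)).card : ℕ) : ℝ)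
              ≤ (S.card : ℝ) := by exact_mod_cast h2
          nlinarith
  apply max_le
  · have : (n : ℝ) ≤ (N : ℝ) := by
      rw [← hScard]; exact_mod_cast hn_le
    rwa [hncast] at this
  · rw [hoscSum]
    calc ε⁻¹ * ∑ ℓ ∈ Finset.range n, (M ℓ - m ℓ)
        ≤ ε⁻¹ * ((S.card : ℝ) * ε) := by
          apply mul_le_mul_of_nonneg_left hsum_le (inv_nonneg.mpr hεpos.le)
      _ = (S.card : ℝ) := by field_simp
      _ = (N : ℝ) := by rw [hScard]
end

section
/- Let A be an irreducible nonnegative n×n matrix (n ≥ 1), and suppose for every pair i,j ∈ {1,...,n} there exists a finite sequence i_0 = j, i_1, ..., i_t = i with a_{i_ℓ, i_{ℓ-1}} > 0 for all 1 ≤ ℓ ≤ t. Then ρ(A) > 0 and there is a strictly positive eigenvector w with A w = ρ(A) w. -/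
open scoped ENNReal

/-- The spectral radius of a real square matrix: the maximum of the moduli of its
complex eigenvalues, i.e. the spectral radius of its complexification. -/
noncomputable def specRad {n : Type*} [Fintype n] [DecidableEq n]
    (A : Matrix n n ℝ) : ℝ≥0∞ :=
  spectralRadius ℂ (A.map (fun x => (x : ℂ)))

section PFAux

variable {n : Type*} [Fintype n] [DecidableEq n]

lemma pow_entry_nonneg (A : Matrix n n ℝ) (hA : ∀ i j, 0 ≤ A i j) :
    ∀ (k : ℕ) (i j : n), 0 ≤ (A ^ k) i j := by
  intro k
  induction k with
  | zero => intro i j; simp [Matrix.one_apply]; positivity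
  | succ k ih =>
    intro i j
    rw [pow_succ, Matrix.mul_apply]
    exact Finset.sum_nonneg fun l _ => mul_nonneg (ih i l) (hA l j)

lemma chain_pow_pos (A : Matrix n n ℝ) (hA : ∀ i j, 0 ≤ A i j) :
    ∀ (s : ℕ) (c : ℕ → n), (∀ ℓ < s, 0 < A (c (ℓ + 1)) (c ℓ)) → 0 < (A ^ s) (c s) (c 0) := by
  intro s
  induction s with
  | zero => intro c _; simp [Matrix.one_apply]
  | succ s ih =>
    intro c hc
    rw [pow_succ', Matrix.mul_apply]
    have h1 : 0 < A (c (s + 1)) (c s) * (A ^ s) (c s) (c 0) :=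
      mul_pos (hc s (lt_add_one s)) (ih c fun ℓ hℓ => hc ℓ (by omega))
    refine lt_of_lt_of_le h1 (Finset.single_le_sum (f := fun l => A (c (s+1)) l * (A ^ s) l (c 0))
      (fun l _ => mul_nonneg (hA _ _) (pow_entry_nonneg A hA _ _ _)) (Finset.mem_univ _))

lemma pow_add_one_pos (A : Matrix n n ℝ) (hA : ∀ i j, 0 ≤ A i j) :
    ∀ (k : ℕ), (∀ i j, 0 ≤ ((A + 1) ^ k) i j) ∧
      (∀ L ≤ k, ∀ i j, 0 < (A ^ L) i j → 0 < ((A + 1) ^ k) i j) := by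
  intro k
  induction k with
  | zero =>
    constructor
    · intro i j; simp [Matrix.one_apply]; positivity
    · intro L hL i j h
      interval_cases L
      simpa using h
  | succ k ih =>
    obtain ⟨ihn, ihp⟩ := ih
    have hA1 : ∀ i j, 0 ≤ (A + 1) i j := by
      intro i j
      simp only [Matrix.add_apply, Matrix.one_apply]
      split <;> [linarith [hA i j]; simpa using hA i j]
    constructor
    · intro i j
      rw [pow_succ, Matrix.mul_apply]
      exact Finset.sum_nonneg fun l _ => mul_nonneg (ihn i l) (hA1 l j)
    · intro L hL i j h
      rw [pow_succ, Matrix.mul_apply]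
      have key : ∃ l, 0 < ((A + 1) ^ k) i l * (A + 1) l j := by
        rcases Nat.lt_or_ge L (k + 1) with hL' | hL'
        · refine ⟨j, mul_pos (ihp L (by omega) i j h) ?_⟩
          simp only [Matrix.add_apply, Matrix.one_apply_eq]
          linarith [hA j j]
        · have hLk : L = k + 1 := by omega
          subst hLk
          rw [pow_succ, Matrix.mul_apply] at h
          have : ∃ l, 0 < (A ^ k) i l * A l j := by
            by_contra hcon
            push_neg at hcon
            exact absurd h (not_lt.mpr (Finset.sum_nonpos fun l _ => hcon l))
          obtain ⟨l, hl⟩ := this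
          have h1 : 0 < (A ^ k) i l := by
            rcases (mul_pos_iff.mp hl) with ⟨h1, _⟩ | ⟨h1, h2⟩
            · exact h1
            · exact absurd h2 (not_lt.mpr (hA l j))
          have h2 : 0 < A l j := by
            rcases (mul_pos_iff.mp hl) with ⟨_, h2⟩ | ⟨_, h2⟩
            · exact h2
            · exact absurd ‹(A ^ k) i l < 0› (not_lt.mpr (pow_entry_nonneg A hA k i l))
          refine ⟨l, mul_pos (ihp k le_rfl i l h1) ?_⟩
          simp only [Matrix.add_apply, Matrix.one_apply]
          split <;> [linarith; linarith]
      obtain ⟨l, hl⟩ := key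
      exact lt_of_lt_of_le hl (Finset.single_le_sum
        (f := fun l => ((A + 1) ^ k) i l * (A + 1) l j)
        (fun l _ => mul_nonneg (ihn i l) (hA1 l j)) (Finset.mem_univ l))

lemma fin_chain_pow_pos (A : Matrix n n ℝ) (hA : ∀ i j, 0 ≤ A i j) (t : ℕ)
    (c : Fin (t + 2) → n)
    (hcs : ∀ ℓ : Fin (t + 1), 0 < A (c ℓ.succ) (c ℓ.castSucc)) :
    0 < (A ^ (t + 1)) (c (Fin.last (t + 1))) (c 0) := by
  have key := chain_pow_pos A hA (t + 1) (fun ℓ => c ⟨min ℓ (t + 1), by omega⟩) (by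
    intro ℓ hℓ
    have h1 : (⟨min (ℓ + 1) (t + 1), by omega⟩ : Fin (t + 2))
        = (⟨ℓ, hℓ⟩ : Fin (t + 1)).succ := by
      ext; simp [Fin.succ]; omega
    have h2 : (⟨min ℓ (t + 1), by omega⟩ : Fin (t + 2))
        = (⟨ℓ, hℓ⟩ : Fin (t + 1)).castSucc := by
      ext; simp [Fin.castSucc, Fin.castAdd, Fin.castLE]; omega
    simp only [h1, h2]
    exact hcs _)
  have e1 : (⟨min (t + 1) (t + 1), by omega⟩ : Fin (t + 2)) = Fin.last (t + 1) := by
    ext; simp [Fin.last]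
  have e2 : (⟨min 0 (t + 1), by omega⟩ : Fin (t + 2)) = 0 := by
    ext; simp
  simp only [e1, e2] at key
  exact key

lemma exists_pos_eigenvector [Nonempty n] (A : Matrix n n ℝ) (hA : ∀ i j, 0 ≤ A i j)
    (hirr : ∀ i j : n, ∃ t : ℕ, ∃ c : Fin (t + 2) → n,
      c 0 = j ∧ c (Fin.last (t + 1)) = i ∧
        ∀ ℓ : Fin (t + 1), 0 < A (c ℓ.succ) (c ℓ.castSucc)) :
    ∃ r : ℝ, 0 < r ∧ ∃ w : n → ℝ, (∀ i, 0 < w i) ∧ A.mulVec w = r • w := by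
  classical
  set m : ℕ := (Finset.univ.sup fun p : n × n => (hirr p.1 p.2).choose) + 1 with hm
  set B : Matrix n n ℝ := (A + 1) ^ m with hBdef
  have hBnn : ∀ i j, 0 ≤ B i j := (pow_add_one_pos A hA m).1
  have hB : ∀ i j, 0 < B i j := by
    intro i j
    obtain ⟨c, hc0, hcl, hcs⟩ := (hirr i j).choose_spec
    have hAT := fin_chain_pow_pos A hA (hirr i j).choose c hcs
    rw [hcl, hc0] at hAT
    refine (pow_add_one_pos A hA m).2 ((hirr i j).choose + 1) ?_ i j hAT
    have : (hirr i j).choose ≤ Finset.univ.sup fun p : n × n => (hirr p.1 p.2).choose :=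
      Finset.le_sup (f := fun p : n × n => (hirr p.1 p.2).choose) (Finset.mem_univ (i, j))
    omega
  set S : Set (n → ℝ) := {x | ∀ i, 0 ≤ x i} ∩ {x | ∑ i, x i = 1} with hSdef
  have hSclosed : IsClosed S := by
    refine IsClosed.inter ?_ ?_
    · have : {x : n → ℝ | ∀ i, 0 ≤ x i} = ⋂ i, {x : n → ℝ | 0 ≤ x i} := by
        ext x; simp
      rw [this]
      exact isClosed_iInter fun i => isClosed_le continuous_const (continuous_apply i)
    · exact isClosed_eq (continuous_finset_sum _ fun i _ => continuous_apply i) continuous_const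
  have hScomp : IsCompact S := by
    refine (isCompact_univ_pi fun _ : n => isCompact_Icc (a := (0:ℝ)) (b := 1)).of_isClosed_subset
      hSclosed ?_
    rintro x ⟨hx1, hx2⟩ i _
    refine ⟨hx1 i, ?_⟩
    calc x i ≤ ∑ j, x j := Finset.single_le_sum (fun j _ => hx1 j) (Finset.mem_univ i)
    _ = 1 := hx2
  have hSne : S.Nonempty := by
    refine ⟨fun _ => (Fintype.card n : ℝ)⁻¹, fun i => by positivity, ?_⟩
    have hcn : (Fintype.card n : ℝ) ≠ 0 := by
      simp [Fintype.card_ne_zero]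
    simp only [Set.mem_setOf_eq, Finset.sum_const, Finset.card_univ, nsmul_eq_mul]
    field_simp
  have hmvcont : ∀ M : Matrix n n ℝ, Continuous fun x : n → ℝ => M.mulVec x := by
    intro M
    refine continuous_pi fun i => ?_
    simp only [Matrix.mulVec, dotProduct]
    exact continuous_finset_sum _ fun j _ => continuous_const.mul (continuous_apply j)
  set K : Set (n → ℝ) := (fun x => B.mulVec x) '' S with hKdef
  have hKcomp : IsCompact K := hScomp.image (hmvcont B)
  have hKne : K.Nonempty := hSne.image _
  have exists_pos_coord : ∀ x ∈ S, ∃ j, 0 < x j := by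
    rintro x ⟨hx1, hx2⟩
    by_contra hcon
    push_neg at hcon
    have h1 : ∑ i, x i ≤ 0 := Finset.sum_nonpos fun i _ => hcon i
    simp only [Set.mem_setOf_eq] at hx2
    linarith
  have hKpos : ∀ y ∈ K, ∀ i, 0 < y i := by
    rintro y ⟨x, hxS, rfl⟩ i
    obtain ⟨j, hj⟩ := exists_pos_coord x hxS
    have : 0 < B i j * x j := mul_pos (hB i j) hj
    refine lt_of_lt_of_le this (Finset.single_le_sum (f := fun j => B i j * x j)
      (fun l _ => mul_nonneg (hBnn i l) (hxS.1 l)) (Finset.mem_univ j))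
  set φ : (n → ℝ) → ℝ :=
    fun y => Finset.univ.inf' Finset.univ_nonempty fun i => A.mulVec y i / y i with hφdef
  have hφcont : ContinuousOn φ {y : n → ℝ | ∀ i, 0 < y i} := by
    refine ContinuousOn.finset_inf'_apply Finset.univ_nonempty fun i _ => ?_
    exact ContinuousOn.div ((continuous_apply i).comp (hmvcont A)).continuousOn
      (continuous_apply i).continuousOn fun y hy => (hy i).ne'
  obtain ⟨y, hyK, hymax⟩ := hKcomp.exists_isMaxOn hKne (hφcont.mono fun y hy => hKpos y hy)
  set r : ℝ := φ y with hrdef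
  have hypos : ∀ i, 0 < y i := hKpos y hyK
  have hry : ∀ i, r * y i ≤ A.mulVec y i := by
    intro i
    have h1 : r ≤ A.mulVec y i / y i :=
      Finset.inf'_le (fun i => A.mulVec y i / y i) (Finset.mem_univ i)
    exact (le_div_iff₀ (hypos i)).mp h1
  have heig : A.mulVec y = r • y := by
    by_contra hne
    set z : n → ℝ := A.mulVec y - r • y with hzdef
    have hz0 : ∀ i, 0 ≤ z i := by
      intro i
      simp only [hzdef, Pi.sub_apply, Pi.smul_apply, smul_eq_mul, sub_nonneg]
      exact hry i
    have hzne : z ≠ 0 := fun h => hne (by rwa [sub_eq_zero] at h)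
    obtain ⟨j0, hj0⟩ : ∃ j0, 0 < z j0 := by
      by_contra hcon
      push_neg at hcon
      exact hzne (funext fun i => le_antisymm (hcon i) (hz0 i))
    have hBz : ∀ i, 0 < B.mulVec z i := by
      intro i
      have h1 : 0 < B i j0 * z j0 := mul_pos (hB i j0) hj0
      refine lt_of_lt_of_le h1 (Finset.single_le_sum (f := fun j => B i j * z j)
        (fun l _ => mul_nonneg (hBnn i l) (hz0 l)) (Finset.mem_univ j0))
    set y' : n → ℝ := B.mulVec y with hy'def
    have hy'pos : ∀ i, 0 < y' i := by
      intro i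
      have h1 : 0 < B i (Classical.arbitrary n) * y (Classical.arbitrary n) :=
        mul_pos (hB _ _) (hypos _)
      refine lt_of_lt_of_le h1 (Finset.single_le_sum (f := fun j => B i j * y j)
        (fun l _ => mul_nonneg (hBnn i l) (hypos l).le) (Finset.mem_univ _))
    have hcomm : B * A = A * B :=
      (((Commute.refl A).add_right (Commute.one_right A)).pow_right m).symm
    have hBz' : B.mulVec z = A.mulVec y' - r • y' := by
      rw [hzdef, Matrix.mulVec_sub, Matrix.mulVec_smul, hy'def,
        Matrix.mulVec_mulVec, hcomm, ← Matrix.mulVec_mulVec]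
    have hr' : ∀ i, r * y' i < A.mulVec y' i := by
      intro i
      have := hBz i
      rw [hBz'] at this
      simp only [Pi.sub_apply, Pi.smul_apply, smul_eq_mul, sub_pos] at this
      exact this
    set σ : ℝ := ∑ i, y i with hσdef
    have hσpos : 0 < σ := Finset.sum_pos (fun i _ => hypos i) Finset.univ_nonempty
    have hyS : σ⁻¹ • y ∈ S := by
      constructor
      · intro i
        exact mul_nonneg (inv_nonneg.mpr hσpos.le) (hypos i).le
      · simp only [Set.mem_setOf_eq, Pi.smul_apply, smul_eq_mul, ← Finset.mul_sum]
        field_simp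
        exact hσdef.symm
    have hy''K : σ⁻¹ • y' ∈ K := ⟨σ⁻¹ • y, hyS, by show B.mulVec (σ⁻¹ • y) = σ⁻¹ • y'; rw [hy'def, Matrix.mulVec_smul]⟩
    have hφeq : φ (σ⁻¹ • y') = φ y' := by
      refine Finset.inf'_congr _ rfl fun i _ => ?_
      rw [Matrix.mulVec_smul]
      simp only [Pi.smul_apply, smul_eq_mul]
      rw [mul_div_mul_left _ _ (inv_ne_zero hσpos.ne')]
    have hφy' : r < φ y' := by
      rw [hφdef]
      rw [Finset.lt_inf'_iff]
      intro i _
      exact (lt_div_iff₀ (hy'pos i)).mpr (hr' i)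
    have h5 : φ (σ⁻¹ • y') ≤ r := hymax hy''K
    rw [hφeq] at h5
    linarith
  -- positivity of r
  have hrpos : 0 < r := by
    obtain ⟨t0, c, hc0, hcl, hcs⟩ := hirr (Classical.arbitrary n) (Classical.arbitrary n)
    have hstep := hcs (Fin.last t0)
    rw [Fin.succ_last, hcl] at hstep
    set i0 := Classical.arbitrary n
    set j0 := c (Fin.last t0).castSucc
    have h1 : 0 < A i0 j0 * y j0 := mul_pos hstep (hypos j0)
    have h2 : A i0 j0 * y j0 ≤ A.mulVec y i0 :=
      Finset.single_le_sum (f := fun j => A i0 j * y j)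
        (fun l _ => mul_nonneg (hA i0 l) (hypos l).le) (Finset.mem_univ j0)
    have h3 : 0 < r * y i0 := by
      have := heig
      have h4 : A.mulVec y i0 = r * y i0 := by rw [heig]; simp
      linarith
    nlinarith [hypos i0]
  exact ⟨r, hrpos, y, hypos, heig⟩

lemma hirr_transpose (A : Matrix n n ℝ)
    (hirr : ∀ i j : n, ∃ t : ℕ, ∃ c : Fin (t + 2) → n,
      c 0 = j ∧ c (Fin.last (t + 1)) = i ∧
        ∀ ℓ : Fin (t + 1), 0 < A (c ℓ.succ) (c ℓ.castSucc)) :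
    ∀ i j : n, ∃ t : ℕ, ∃ c : Fin (t + 2) → n,
      c 0 = j ∧ c (Fin.last (t + 1)) = i ∧
        ∀ ℓ : Fin (t + 1), 0 < A.transpose (c ℓ.succ) (c ℓ.castSucc) := by
  intro i j
  obtain ⟨t, d, hd0, hdl, hds⟩ := hirr j i
  refine ⟨t, fun ℓ => d ⟨t + 1 - ℓ, by omega⟩, ?_, ?_, ?_⟩
  · show d ⟨t + 1 - ((0 : Fin (t + 2)) : ℕ), by omega⟩ = j
    have e : (⟨t + 1 - ((0 : Fin (t + 2)) : ℕ), by omega⟩ : Fin (t + 2)) = Fin.last (t + 1) :=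
      Fin.ext (by simp)
    rw [e, hdl]
  · show d ⟨t + 1 - ((Fin.last (t + 1) : Fin (t + 2)) : ℕ), by omega⟩ = i
    have e : (⟨t + 1 - ((Fin.last (t + 1) : Fin (t + 2)) : ℕ), by omega⟩ : Fin (t + 2))
        = 0 := Fin.ext (by simp)
    rw [e, hd0]
  · intro ℓ
    have hℓ : (ℓ : ℕ) ≤ t := by omega
    have key := hds ⟨t - ℓ, by omega⟩
    rw [Matrix.transpose_apply]
    show 0 < A (d ⟨t + 1 - ((ℓ.castSucc : Fin (t + 2)) : ℕ), by omega⟩)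
        (d ⟨t + 1 - ((ℓ.succ : Fin (t + 2)) : ℕ), by omega⟩)
    have e1 : (⟨t + 1 - ((ℓ.castSucc : Fin (t + 2)) : ℕ), by omega⟩ : Fin (t + 2))
        = (⟨t - ℓ, by omega⟩ : Fin (t + 1)).succ :=
      Fin.ext (by simp [Fin.val_succ]; try omega)
    have e2 : (⟨t + 1 - ((ℓ.succ : Fin (t + 2)) : ℕ), by omega⟩ : Fin (t + 2))
        = (⟨t - ℓ, by omega⟩ : Fin (t + 1)).castSucc :=
      Fin.ext (by simp [Fin.val_succ]; try omega)
    rw [e1, e2]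
    exact key

lemma mem_spectrum_of_eigen (A : Matrix n n ℝ) {r : ℝ} {w : n → ℝ}
    (hw : ∃ i, w i ≠ 0) (heig : A.mulVec w = r • w) :
    (r : ℂ) ∈ spectrum ℂ (A.map (fun x => (x : ℂ))) := by
  rw [spectrum.mem_iff]
  intro hunit
  rw [Matrix.isUnit_iff_isUnit_det, isUnit_iff_ne_zero] at hunit
  apply hunit
  rw [← Matrix.exists_mulVec_eq_zero_iff]
  refine ⟨fun i => (w i : ℂ), ?_, ?_⟩
  · obtain ⟨i, hi⟩ := hw
    intro h
    have h2 := congrFun h i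
    rw [Pi.zero_apply] at h2
    exact hi (by exact_mod_cast h2)
  · funext i
    have h1 : (algebraMap ℂ (Matrix n n ℂ)) r = (r : ℂ) • (1 : Matrix n n ℂ) := by
      rw [Algebra.algebraMap_eq_smul_one]
    rw [h1, Matrix.sub_mulVec, Matrix.smul_mulVec, Matrix.one_mulVec]
    have h2 : ((A.map (fun x => (x : ℂ))).mulVec fun i => (w i : ℂ)) i
        = ((A.mulVec w i : ℝ) : ℂ) := by
      simp only [Matrix.mulVec, dotProduct, Matrix.map_apply]
      push_cast
      rfl
    have h3 : A.mulVec w i = r * w i := by rw [heig]; simp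
    simp only [Pi.sub_apply, Pi.smul_apply, smul_eq_mul, Pi.zero_apply, h2, h3]
    push_cast
    ring

lemma spectrum_bound (A : Matrix n n ℝ) (hA : ∀ i j, 0 ≤ A i j)
    {u : n → ℝ} (hu : ∀ i, 0 < u i) {r' : ℝ}
    (hur : A.transpose.mulVec u = r' • u)
    {μ : ℂ} (hμ : μ ∈ spectrum ℂ (A.map (fun x => (x : ℂ)))) : ‖μ‖ ≤ r' := by
  rw [spectrum.mem_iff] at hμ
  rw [Matrix.isUnit_iff_isUnit_det, isUnit_iff_ne_zero, not_ne_iff,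
    ← Matrix.exists_mulVec_eq_zero_iff] at hμ
  obtain ⟨v, hv0, hv⟩ := hμ
  have heig : (A.map (fun x => (x : ℂ))).mulVec v = μ • v := by
    have h1 : (algebraMap ℂ (Matrix n n ℂ)) μ = (μ : ℂ) • (1 : Matrix n n ℂ) :=
      Algebra.algebraMap_eq_smul_one μ
    rw [h1, Matrix.sub_mulVec, Matrix.smul_mulVec, Matrix.one_mulVec, sub_eq_zero] at hv
    exact hv.symm
  set a : n → ℝ := fun i => ‖v i‖ with hadef
  have h1 : ∀ i : n, ‖μ‖ * a i ≤ A.mulVec a i := by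
    intro i
    have e1 : ‖μ‖ * a i = ‖(μ • v) i‖ := by
      simp [hadef, norm_smul]
    rw [e1, ← heig]
    have e2 : ((A.map (fun x => (x : ℂ))).mulVec v) i = ∑ j, (A i j : ℂ) * v j := by
      simp [Matrix.mulVec, dotProduct, Matrix.map_apply]
    rw [e2]
    refine le_trans (norm_sum_le _ _) ?_
    simp only [Matrix.mulVec, dotProduct]
    refine le_of_eq (Finset.sum_congr rfl fun j _ => ?_)
    rw [norm_mul, Complex.norm_real, Real.norm_of_nonneg (hA i j)]
  have hsum : ∑ i, u i * (‖μ‖ * a i) ≤ ∑ i, u i * A.mulVec a i :=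
    Finset.sum_le_sum fun i _ => mul_le_mul_of_nonneg_left (h1 i) (hu i).le
  have hRHS : ∑ i, u i * A.mulVec a i = r' * ∑ j, u j * a j := by
    have e1 : ∀ i, u i * A.mulVec a i = ∑ j, u i * (A i j * a j) := by
      intro i
      simp only [Matrix.mulVec, dotProduct, Finset.mul_sum]
    rw [Finset.sum_congr rfl fun i _ => e1 i, Finset.sum_comm]
    have e2 : ∀ j, ∑ i, u i * (A i j * a j) = (A.transpose.mulVec u j) * a j := by
      intro j
      simp only [Matrix.mulVec, dotProduct, Matrix.transpose_apply, Finset.sum_mul]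
      exact Finset.sum_congr rfl fun i _ => by ring
    rw [Finset.sum_congr rfl fun j _ => e2 j]
    rw [hur, Finset.mul_sum]
    exact Finset.sum_congr rfl fun j _ => by simp [mul_assoc]
  have hLHS : ∑ i, u i * (‖μ‖ * a i) = ‖μ‖ * ∑ j, u j * a j := by
    rw [Finset.mul_sum]
    exact Finset.sum_congr rfl fun j _ => by ring
  have hc : 0 < ∑ j, u j * a j := by
    obtain ⟨i0, hi0⟩ : ∃ i0, v i0 ≠ 0 := by
      by_contra hcon
      push_neg at hcon
      exact hv0 (funext hcon)
    have hai0 : 0 < a i0 := norm_pos_iff.mpr hi0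
    refine lt_of_lt_of_le (mul_pos (hu i0) hai0) (Finset.single_le_sum
      (f := fun j => u j * a j) (fun j _ => mul_nonneg (hu j).le (norm_nonneg _))
      (Finset.mem_univ i0))
  rw [hLHS, hRHS] at hsum
  exact le_of_mul_le_mul_right hsum hc

end PFAux

/-- Perron–Frobenius theorem for irreducible nonnegative matrices: the spectral radius is a
positive eigenvalue with a strictly positive eigenvector. Irreducibility: for every pair
`i, j` there is a chain `i₀ = j, …, i_t = i` (with `t ≥ 1`) along strictly positive entries
of `A`. -/
theorem perron_frobenius_irreducible {n : Type*} [Fintype n] [DecidableEq n] [Nonempty n]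
    (A : Matrix n n ℝ) (hA : ∀ i j, 0 ≤ A i j)
    (hirr : ∀ i j : n, ∃ t : ℕ, ∃ c : Fin (t + 2) → n,
      c 0 = j ∧ c (Fin.last (t + 1)) = i ∧
        ∀ ℓ : Fin (t + 1), 0 < A (c ℓ.succ) (c ℓ.castSucc)) :
    0 < specRad A ∧
      ∃ w : n → ℝ, (∀ i, 0 < w i) ∧ A.mulVec w = (specRad A).toReal • w := by
  obtain ⟨r, hr, w, hw, heig⟩ := exists_pos_eigenvector A hA hirr
  have hAT : ∀ i j, 0 ≤ A.transpose i j := fun i j => hA j i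
  obtain ⟨r', hr', u, hu, heig'⟩ :=
    exists_pos_eigenvector A.transpose hAT (hirr_transpose A hirr)
  have hbound : ∀ μ ∈ spectrum ℂ (A.map (fun x => (x : ℂ))), ‖μ‖ ≤ r' :=
    fun μ hμ => spectrum_bound A hA hu heig' hμ
  have hrmem : (r : ℂ) ∈ spectrum ℂ (A.map (fun x => (x : ℂ))) :=
    mem_spectrum_of_eigen A ⟨Classical.arbitrary n, (hw _).ne'⟩ heig
  have hr'mem : (r' : ℂ) ∈ spectrum ℂ (A.transpose.map (fun x => (x : ℂ))) :=
    mem_spectrum_of_eigen A.transpose ⟨Classical.arbitrary n, (hu _).ne'⟩ heig'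
  have hbound2 : ∀ μ ∈ spectrum ℂ (A.transpose.map (fun x => (x : ℂ))), ‖μ‖ ≤ r :=
    fun μ hμ => spectrum_bound A.transpose hAT hw
      (by rw [Matrix.transpose_transpose]; exact heig) hμ
  have h1 : r' ≤ r := by
    have h2 := hbound2 _ hr'mem
    rwa [Complex.norm_real, Real.norm_of_nonneg hr'.le] at h2
  have hspec : specRad A = ENNReal.ofReal r := by
    rw [specRad, spectralRadius]
    apply le_antisymm
    · refine iSup₂_le fun μ hμ => ?_
      rw [← (by exact ofReal_norm μ : ENNReal.ofReal ‖μ‖ = (‖μ‖₊ : ℝ≥0∞))]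
      exact ENNReal.ofReal_le_ofReal (le_trans (hbound μ hμ) h1)
    · have h3 : (↑‖(r : ℂ)‖₊ : ℝ≥0∞) ≤ ⨆ μ ∈ spectrum ℂ (A.map (fun x => (x : ℂ))), ↑‖μ‖₊ :=
        le_iSup₂ (f := fun μ _ => (↑‖μ‖₊ : ℝ≥0∞)) _ hrmem
      rw [← (by exact ofReal_norm (r : ℂ) : ENNReal.ofReal ‖(r : ℂ)‖ = (‖(r : ℂ)‖₊ : ℝ≥0∞)), Complex.norm_real, Real.norm_of_nonneg hr.le] at h3
      exact h3
  refine ⟨by rw [hspec]; exact ENNReal.ofReal_pos.mpr hr, w, hw, ?_⟩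
  rw [hspec, ENNReal.toReal_ofReal hr.le]
  exact heig
end

section
/- Let D₁,...,D_N and I₁,...,I_N be closed intervals with I_n ⊆ ⋃_j D_j, and define a directed graph on {1,...,N} with an edge from j to i whenever I_j ⊆ D_i. Let Λ be a strongly connected component of this graph, and suppose the local operator W(A) = ⋃_{n∈Λ} L_n(A ∩ D_n) (with each L_n : D_n → I_n a homeomorphism) satisfies: B₀ := ⋃_{n∈Λ} D_n and B_k := W(B_{k-1}) for k ≥ 1. Then ⋃_{n∈Λ} D_n = ⋃_{n∈Λ} I_n if and only if B₁ = B₂, if and only if B_k = B_{k+1} for every k ≥ 1, if and only if ⋂_{k≥0} B_k = B₁. -/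
/-- Equivalent characterizations of when the basic sets of the local iterated function
system `{Lₙ : n ∈ Λ}` stabilize: with `B₀ = ⋃_{n∈Λ} Dₙ` and `B_{k+1} = ⋃_{n∈Λ} Lₙ(B_k ∩ Dₙ)`,
one has `⋃_{n∈Λ} Dₙ = ⋃_{n∈Λ} Iₙ` iff `B₁ = B₂`, iff `B_k = B_{k+1}` for all `k ≥ 1`,
iff `⋂_k B_k = B₁`. -/
theorem basic_sets_stabilize_iff (N : ℕ) (hN : 0 < N)
    (x : Fin (N + 1) → ℝ) (hx : StrictMono x)
    (ll rr : Fin N → Fin (N + 1)) (hlr : ∀ n, ll n < rr n)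
    (I D : Fin N → Set ℝ)
    (hI : ∀ n, I n = Set.Icc (x n.castSucc) (x n.succ))
    (hD : ∀ n, D n = Set.Icc (x (ll n)) (x (rr n)))
    (hID : ∀ n, I n ⊆ ⋃ j, D j)
    (L : Fin N → ℝ → ℝ) (Λ : Finset (Fin N)) (hΛne : Λ.Nonempty)
    (hL : ∀ n ∈ Λ, Set.BijOn (L n) (D n) (I n) ∧ ContinuousOn (L n) (D n))
    (hconn : ∀ i ∈ Λ, ∀ j ∈ Λ, ∃ t : ℕ, ∃ c : Fin (t + 2) → Fin N,
      (∀ ℓ, c ℓ ∈ Λ) ∧ c 0 = j ∧ c (Fin.last (t + 1)) = i ∧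
        ∀ ℓ : Fin (t + 1), I (c ℓ.castSucc) ⊆ D (c ℓ.succ))
    (B : ℕ → Set ℝ)
    (hB0 : B 0 = ⋃ n ∈ Λ, D n)
    (hBk : ∀ k : ℕ, B (k + 1) = ⋃ n ∈ Λ, L n '' (B k ∩ D n)) :
    ((⋃ n ∈ Λ, D n) = (⋃ n ∈ Λ, I n) ↔ B 1 = B 2) ∧
      (B 1 = B 2 ↔ ∀ k : ℕ, 1 ≤ k → B k = B (k + 1)) ∧
      (B 1 = B 2 ↔ (⋂ k : ℕ, B k) = B 1) := by
  classical
  have hDB0 : ∀ n ∈ Λ, D n ⊆ B 0 := fun n hn => by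
    rw [hB0]; exact fun y hy => Set.mem_iUnion₂.2 ⟨n, hn, hy⟩
  have hB1 : B 1 = ⋃ n ∈ Λ, I n := by
    rw [hBk 0]
    refine Set.iUnion₂_congr fun n hn => ?_
    rw [Set.inter_eq_self_of_subset_right (hDB0 n hn), (hL n hn).1.image_eq]
  have hIB1 : ∀ n ∈ Λ, I n ⊆ B 1 := fun n hn => by
    rw [hB1]; exact fun y hy => Set.mem_iUnion₂.2 ⟨n, hn, hy⟩
  have hIB0 : ∀ n ∈ Λ, I n ⊆ B 0 := by
    intro n hn
    obtain ⟨t, c, hcΛ, h0, -, hstep⟩ := hconn n hn n hn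
    have h := hstep 0
    rw [Fin.castSucc_zero, h0] at h
    exact h.trans (hDB0 _ (hcΛ _))
  have hmonoW : ∀ A A' : Set ℝ, A ⊆ A' →
      (⋃ n ∈ Λ, L n '' (A ∩ D n)) ⊆ ⋃ n ∈ Λ, L n '' (A' ∩ D n) := by
    intro A A' h
    exact Set.iUnion₂_mono fun n hn =>
      Set.image_mono (Set.inter_subset_inter_left _ h)
  have hdec : ∀ k, B (k + 1) ⊆ B k := by
    intro k
    induction k with
    | zero =>
        rw [hB1]
        exact Set.iUnion₂_subset fun n hn => hIB0 n hn
    | succ k ih =>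
        calc B (k + 2) = ⋃ n ∈ Λ, L n '' (B (k + 1) ∩ D n) := hBk (k + 1)
          _ ⊆ ⋃ n ∈ Λ, L n '' (B k ∩ D n) := hmonoW _ _ ih
          _ = B (k + 1) := (hBk k).symm
  have hclosedB1 : IsClosed (B 1) := by
    rw [hB1]
    refine Set.Finite.isClosed_biUnion Λ.finite_toSet fun n _ => ?_
    rw [hI n]; exact isClosed_Icc
  -- the hard direction
  have key : B 1 = B 2 → (⋃ n ∈ Λ, D n) = ⋃ n ∈ Λ, I n := by
    intro h12
    rw [← hB0, ← hB1]
    refine Set.Subset.antisymm ?_ (hdec 0)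
    rw [hB0]
    refine Set.iUnion₂_subset fun n hn => ?_
    -- show D n ⊆ B 1
    have hab : x (ll n) < x (rr n) := hx (hlr n)
    have hmem : ∀ y ∈ D n, L n y ∈ Set.Ioo (x n.castSucc) (x n.succ) → y ∈ B 1 := by
      intro y hy hyo
      have hp1 : L n y ∈ B 1 :=
        hIB1 n hn (by rw [hI n]; exact Set.Ioo_subset_Icc_self hyo)
      rw [h12, hBk 1] at hp1
      simp only [Set.mem_iUnion, Set.mem_image] at hp1
      obtain ⟨m, hm, q, hq, hLq⟩ := hp1
      have hqI : L m q ∈ I m := (hL m hm).1.mapsTo hq.2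
      rw [hI m] at hqI
      have hmn : m = n := by
        by_contra hne
        rcases lt_or_gt_of_ne hne with hlt | hgt
        · have h1 : x m.succ ≤ x n.castSucc :=
            hx.monotone (by rw [Fin.le_def, Fin.val_succ, Fin.coe_castSucc]; exact Fin.lt_def.mp hlt)
          have : L m q ≤ x n.castSucc := hqI.2.trans h1
          rw [hLq] at this
          exact absurd hyo.1 (not_lt.2 this)
        · have h1 : x n.succ ≤ x m.castSucc :=
            hx.monotone (by rw [Fin.le_def, Fin.val_succ, Fin.coe_castSucc]; exact Fin.lt_def.mp hgt)
          have : x n.succ ≤ L m q := h1.trans hqI.1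
          rw [hLq] at this
          exact absurd hyo.2 (not_lt.2 this)
      subst hmn
      have : q = y := (hL m hm).1.injOn hq.2 hy hLq
      subst this
      exact hq.1
    have hfin : (D n \ B 1).Finite := by
      have hsub : D n \ B 1 ⊆ D n ∩ L n ⁻¹' ({x n.castSucc, x n.succ} : Set ℝ) := by
        intro y hy
        refine ⟨hy.1, ?_⟩
        have hyI : L n y ∈ I n := (hL n hn).1.mapsTo hy.1
        rw [hI n] at hyI
        by_contra hcon
        simp only [Set.mem_preimage, Set.mem_insert_iff, Set.mem_singleton_iff] at hcon
        push_neg at hcon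
        exact hy.2 (hmem y hy.1
          ⟨lt_of_le_of_ne hyI.1 (Ne.symm hcon.1), lt_of_le_of_ne hyI.2 hcon.2⟩)
      refine Set.Finite.subset ?_ hsub
      refine Set.Finite.of_finite_image ?_ ((hL n hn).1.injOn.mono Set.inter_subset_left)
      refine Set.Finite.subset ((Set.finite_singleton (x n.succ)).insert (x n.castSucc)) ?_
      rintro z ⟨y, ⟨-, hy⟩, rfl⟩
      exact hy
    intro t ht
    by_contra htB
    obtain ⟨ε, hε, hball⟩ := Metric.isOpen_iff.1 hclosedB1.isOpen_compl t htB
    rw [hD n] at ht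
    have hpick : ∃ u v : ℝ, u < v ∧ Set.Ioo u v ⊆ D n \ B 1 := by
      rcases lt_or_eq_of_le ht.2 with htb | htb
      · refine ⟨t, min (x (rr n)) (t + ε), lt_min htb (by linarith), fun y hy => ?_⟩
        have hy1 : t < y := hy.1
        have hy2 : y < x (rr n) := hy.2.trans_le (min_le_left _ _)
        have hy3 : y < t + ε := hy.2.trans_le (min_le_right _ _)
        refine ⟨by rw [hD n]; exact ⟨ht.1.trans hy1.le, hy2.le⟩, ?_⟩
        exact hball (by rw [Metric.mem_ball, Real.dist_eq, abs_of_pos (by linarith)]; linarith)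
      · have hat : x (ll n) < t := htb ▸ hab
        refine ⟨max (x (ll n)) (t - ε), t, max_lt hat (by linarith), fun y hy => ?_⟩
        have hy1 : y < t := hy.2
        have hy2 : x (ll n) < y := (le_max_left _ _).trans_lt hy.1
        have hy3 : t - ε < y := (le_max_right _ _).trans_lt hy.1
        refine ⟨by rw [hD n]; exact ⟨hy2.le, hy1.le.trans ht.2⟩, ?_⟩
        exact hball (by rw [Metric.mem_ball, Real.dist_eq, abs_of_neg (by linarith)]; linarith)
    obtain ⟨u, v, huv, hsub⟩ := hpick
    exact (Set.infinite_coe_iff.mp (Set.Ioo.infinite huv)) (hfin.subset hsub)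
  have fwd : (⋃ n ∈ Λ, D n) = (⋃ n ∈ Λ, I n) → B 1 = B 2 := by
    intro h
    have h01 : B 0 = B 1 := by rw [hB0, hB1, h]
    calc B 1 = ⋃ n ∈ Λ, L n '' (B 0 ∩ D n) := hBk 0
      _ = ⋃ n ∈ Λ, L n '' (B 1 ∩ D n) := by rw [h01]
      _ = B 2 := (hBk 1).symm
  have hall : B 1 = B 2 → ∀ k, B (k + 1) = B (k + 2) := by
    intro h12 k
    induction k with
    | zero => exact h12
    | succ k ih =>
        calc B (k + 2) = ⋃ n ∈ Λ, L n '' (B (k + 1) ∩ D n) := hBk (k + 1)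
          _ = ⋃ n ∈ Λ, L n '' (B (k + 2) ∩ D n) := by rw [ih]
          _ = B (k + 3) := (hBk (k + 2)).symm
  refine ⟨⟨fwd, fun h => key h ▸ rfl⟩, ?_, ?_⟩
  · constructor
    · intro h12 k hk
      obtain ⟨j, rfl⟩ := Nat.exists_eq_add_of_le' hk
      exact hall h12 j
    · intro h
      exact h 1 le_rfl
  · constructor
    · intro h12
      have hB1k : ∀ k, B (k + 1) = B 1 := by
        intro k
        induction k with
        | zero => rfl
        | succ k ih => rw [← ih]; exact (hall h12 k).symm
      refine Set.Subset.antisymm (Set.iInter_subset _ 1) ?_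
      refine Set.subset_iInter fun k => ?_
      cases k with
      | zero => exact hdec 0
      | succ k => rw [hB1k k]
    · intro h
      refine Set.Subset.antisymm ?_ (hdec 1)
      rw [← h]
      exact Set.iInter_subset _ 2
end

section
/- Let f be continuous on ⋃ₙ Iₙ and suppose f(Lₙ(x)) = Sₙ(x) f(x) + qₙ(x) on Dₙ for each n in a strongly connected component Λ, where each Sₙ is continuous with min_{x∈Dₙ}|Sₙ(x)| ≥ s* > 0 and Sₙ, qₙ are of bounded variation on Dₙ. If Var(f, L_n(J)) < ∞ for a closed subinterval J ⊆ Dₙ, then Var(f, J) < ∞; equivalently, if Var(f, J) = ∞ then Var(f, Lₙ(J)) = ∞. -/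
open scoped ENNReal

/-- If `f ∘ L = S·f + q` on `D = [c,d]` with `|S| ≥ s* > 0` and `S, q` of bounded variation,
`f` bounded on a closed subinterval `J = [u,v] ⊆ D`, and `f` has finite total variation on
`L(J)`, then `f` has finite total variation on `J`. -/
theorem variation_finite_of_image (L S q f : ℝ → ℝ) (c d : ℝ)
    (α β : ℝ) (hα : α ≠ 0) (hL : ∀ x, L x = α * x + β)
    (u v : ℝ) (huv : u ≤ v) (hJ : Set.Icc u v ⊆ Set.Icc c d)
    (heq : ∀ x ∈ Set.Icc c d, f (L x) = S x * f x + q x)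
    (sstar : ℝ) (hs : 0 < sstar) (hS : ∀ x ∈ Set.Icc c d, sstar ≤ |S x|)
    (hSV : eVariationOn S (Set.Icc c d) ≠ ⊤)
    (hqV : eVariationOn q (Set.Icc c d) ≠ ⊤)
    (M : ℝ) (hf : ∀ x ∈ Set.Icc u v, |f x| ≤ M)
    (hvar : eVariationOn f (L '' Set.Icc u v) ≠ ⊤) :
    eVariationOn f (Set.Icc u v) ≠ ⊤ := by
  have hM : 0 ≤ M := (abs_nonneg _).trans (hf u ⟨le_rfl, huv⟩)
  -- pointwise bound
  have key : ∀ x ∈ Set.Icc u v, ∀ y ∈ Set.Icc u v,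
      edist (f x) (f y) ≤ ENNReal.ofReal sstar⁻¹ *
        (edist (f (L x)) (f (L y)) + ENNReal.ofReal M * edist (S x) (S y)
          + edist (q x) (q y)) := by
    intro x hx y hy
    have hxc := hJ hx
    have hyc := hJ hy
    have e1 := heq x hxc
    have e2 := heq y hyc
    have hreal : |f x - f y| ≤ sstar⁻¹ *
        (|f (L x) - f (L y)| + M * |S x - S y| + |q x - q y|) := by
      rw [inv_mul_eq_div, le_div_iff₀ hs, mul_comm]
      calc sstar * |f x - f y| ≤ |S x| * |f x - f y| := by
            exact mul_le_mul_of_nonneg_right (hS x hxc) (abs_nonneg _)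
        _ = |S x * (f x - f y)| := (abs_mul _ _).symm
        _ = |(f (L x) - f (L y)) - (q x - q y) - (S x - S y) * f y| := by
            rw [e1, e2]; ring_nf
        _ ≤ |f (L x) - f (L y)| + |q x - q y| + |S x - S y| * |f y| := by
            calc |(f (L x) - f (L y)) - (q x - q y) - (S x - S y) * f y|
                ≤ |(f (L x) - f (L y)) - (q x - q y)| + |(S x - S y) * f y| :=
                  abs_sub _ _
              _ ≤ |f (L x) - f (L y)| + |q x - q y| + |S x - S y| * |f y| := by
                  rw [abs_mul]; exact add_le_add (abs_sub _ _) le_rfl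
        _ ≤ |f (L x) - f (L y)| + M * |S x - S y| + |q x - q y| := by
            have : |S x - S y| * |f y| ≤ M * |S x - S y| := by
              rw [mul_comm]
              exact mul_le_mul_of_nonneg_right (hf y hy) (abs_nonneg _)
            linarith
    have hd : ∀ a b : ℝ, edist a b = ENNReal.ofReal |a - b| := fun a b => by
      rw [edist_dist, Real.dist_eq]
    rw [hd, hd, hd, hd, ← ENNReal.ofReal_mul hM,
      ← ENNReal.ofReal_add (abs_nonneg _) (mul_nonneg hM (abs_nonneg _)),
      ← ENNReal.ofReal_add (by positivity) (abs_nonneg _),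
      ← ENNReal.ofReal_mul (by positivity)]
    exact ENNReal.ofReal_le_ofReal hreal
  set J := Set.Icc u v
  have hcomp : eVariationOn (f ∘ L) J = eVariationOn f (L '' J) := by
    rcases lt_or_gt_of_ne hα with hneg | hpos
    · exact eVariationOn.comp_eq_of_antitoneOn f L fun a _ b _ hab => by
        simp only [hL]; nlinarith
    · exact eVariationOn.comp_eq_of_monotoneOn f L fun a _ b _ hab => by
        simp only [hL]; nlinarith
  have main : eVariationOn f J ≤ ENNReal.ofReal sstar⁻¹ *
      (eVariationOn f (L '' J) + ENNReal.ofReal M * eVariationOn S (Set.Icc c d)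
        + eVariationOn q (Set.Icc c d)) := by
    rw [eVariationOn]
    apply iSup_le
    rintro ⟨n, ⟨p, hp, hps⟩⟩
    calc ∑ i ∈ Finset.range n, edist (f (p (i + 1))) (f (p i))
        ≤ ∑ i ∈ Finset.range n, ENNReal.ofReal sstar⁻¹ *
            (edist (f (L (p (i+1)))) (f (L (p i)))
              + ENNReal.ofReal M * edist (S (p (i+1))) (S (p i))
              + edist (q (p (i+1))) (q (p i))) :=
          Finset.sum_le_sum fun i _ => key _ (hps _) _ (hps _)
      _ = ENNReal.ofReal sstar⁻¹ *
            ((∑ i ∈ Finset.range n, edist ((f ∘ L) (p (i+1))) ((f ∘ L) (p i)))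
              + ENNReal.ofReal M * (∑ i ∈ Finset.range n, edist (S (p (i+1))) (S (p i)))
              + ∑ i ∈ Finset.range n, edist (q (p (i+1))) (q (p i))) := by
          simp only [Function.comp_apply]
          rw [← Finset.mul_sum, Finset.sum_add_distrib, Finset.sum_add_distrib,
            ← Finset.mul_sum]
      _ ≤ _ := by
          gcongr
          · exact eVariationOn.sum_le hp hps |>.trans (le_of_eq hcomp)
          · exact eVariationOn.sum_le hp fun i => hJ (hps i)
          · exact eVariationOn.sum_le hp fun i => hJ (hps i)
  intro htop
  rw [htop] at main
  have : (ENNReal.ofReal sstar⁻¹ *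
      (eVariationOn f (L '' J) + ENNReal.ofReal M * eVariationOn S (Set.Icc c d)
        + eVariationOn q (Set.Icc c d))) ≠ ⊤ := by
    apply ENNReal.mul_ne_top ENNReal.ofReal_ne_top
    apply ENNReal.add_ne_top.2 ⟨ENNReal.add_ne_top.2 ⟨hvar, _⟩, hqV⟩
    exact ENNReal.mul_ne_top ENNReal.ofReal_ne_top hSV
  exact this (top_le_iff.mp main)
end
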